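/- arXiv:1302.4850 — 5 statements merged into one kernel-verified Lean document; each statement's English description precedes it below -/
import Mathlib

section
/- Let α > 0 and n ∈ ℤ. Then ∫_{‖x‖ ≤ p^n} ‖x‖^{α-1} dμ(x) = ((1 - p^{-1})/(1 - p^{-α})) · p^{αn}. -/
/-!
The closed ball of radius `p ^ (k + 1)` in `ℚ_[p]` is the disjoint union of `p` translates of the
ball of radius `p ^ k` (scale the decomposition of `ℤ_[p]` by residues mod `p`), so a Haar measure
gives it mass `p ^ k` once `ℤ_[p]` has mass `1`, and the sphere of radius `p ^ m` has mass
`(1 - p⁻¹) p ^ m`. Since `{0}` is null, the ball of radius `p ^ n` is a.e. the disjoint union of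
the spheres of radii `p ^ (n - k)`, `k ∈ ℕ`, on which `‖x‖ ^ (α - 1)` is constant; the integral is
then the geometric series `(1 - p⁻¹) p ^ (α n) ∑ₖ p ^ (-α k)`.
-/

open MeasureTheory Metric Function
open scoped Pointwise ENNReal

lemma IsUltrametricDist.disjoint_closedBall_of_lt_dist {X : Type*} [PseudoMetricSpace X]
    [IsUltrametricDist X] {x y : X} {r : ℝ} (h : r < dist x y) :
    Disjoint (closedBall x r) (closedBall y r) :=
  Set.disjoint_left.2 fun z hx hy ↦ h.not_ge <|
    (dist_triangle_max x z y).trans (max_le (dist_comm x z ▸ hx) hy)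

namespace Padic

variable {p : ℕ} [hp : Fact p.Prime]

lemma norm_natCast_sub_natCast_eq_one {i j : ℕ} (hi : i < p) (hj : j < p) (hij : i ≠ j) :
    ‖(i : ℚ_[p]) - j‖ = 1 := by
  have hndvd : ¬ (p : ℤ) ∣ (i - j : ℤ) := fun hdvd ↦
    hij (by have := Int.eq_zero_of_abs_lt_dvd hdvd (by rw [abs_lt]; omega); omega)
  have := (norm_intCast_lt_one_iff (p := p)).not.2 hndvd
  push_cast at this
  exact le_antisymm (by exact_mod_cast norm_int_le_one (p := p) (i - j)) (not_lt.1 this)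

lemma closedBall_zero_one_eq_iUnion :
    closedBall (0 : ℚ_[p]) 1 = ⋃ i : Fin p, closedBall (i : ℚ_[p]) (p : ℝ)⁻¹ := by
  ext x
  simp only [mem_closedBall, Set.mem_iUnion, dist_eq_norm, sub_zero]
  constructor
  · intro hx
    let y : ℤ_[p] := ⟨x, hx⟩
    refine ⟨⟨y.zmodRepr, y.zmodRepr_lt_p⟩, ?_⟩
    have := y.norm_sub_zmodRepr_lt_one
    rw [PadicInt.norm_def] at this
    push_cast at this
    simpa using (norm_lt_pow_iff_norm_le_pow_sub_one _ 0).1 (by simpa using this)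
  · rintro ⟨i, hi⟩
    calc ‖x‖ = ‖(x - i) + i‖ := by rw [sub_add_cancel]
      _ ≤ max ‖x - i‖ ‖(i : ℚ_[p])‖ := IsUltrametricDist.norm_add_le_max _ _
      _ ≤ 1 := max_le (hi.trans (inv_le_one_of_one_le₀ (by exact_mod_cast hp.out.one_lt.le)))
          (IsUltrametricDist.norm_natCast_le_one _ _)

lemma closedBall_zero_zpow_succ_eq_iUnion (k : ℤ) :
    closedBall (0 : ℚ_[p]) ((p : ℝ) ^ (k + 1)) =
      ⋃ i : Fin p, closedBall ((p : ℚ_[p]) ^ (-(k + 1)) * i) ((p : ℝ) ^ k) := by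
  have hp0 : (p : ℝ) ≠ 0 := by exact_mod_cast hp.out.ne_zero
  have hc : (p : ℚ_[p]) ^ (-(k + 1)) ≠ 0 := zpow_ne_zero _ (by exact_mod_cast hp.out.ne_zero)
  have hnorm : ‖(p : ℚ_[p]) ^ (-(k + 1))‖ = (p : ℝ) ^ (k + 1) := by
    rw [norm_p_zpow, neg_neg]
  have := congrArg ((p : ℚ_[p]) ^ (-(k + 1)) • ·) (closedBall_zero_one_eq_iUnion (p := p))
  simp only [Set.smul_set_iUnion, smul_closedBall' hc, hnorm, mul_zero, mul_one,
    smul_eq_mul] at this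
  rw [this]
  congr! 2
  rw [zpow_add_one₀ hp0, mul_inv_cancel_right₀ hp0]

lemma pairwise_disjoint_closedBall_zpow (k : ℤ) :
    Pairwise (Disjoint on fun i : Fin p ↦
      closedBall ((p : ℚ_[p]) ^ (-(k + 1)) * i) ((p : ℝ) ^ k)) := by
  intro i j hij
  apply IsUltrametricDist.disjoint_closedBall_of_lt_dist
  rw [dist_eq_norm, ← mul_sub, norm_mul, norm_p_zpow, neg_neg,
    norm_natCast_sub_natCast_eq_one i.isLt j.isLt (Fin.val_injective.ne hij), mul_one]
  exact zpow_lt_zpow_right₀ (by exact_mod_cast hp.out.one_lt) (Int.lt_succ k)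

lemma sphere_zero_zpow_eq_closedBall_sdiff (m : ℤ) :
    sphere (0 : ℚ_[p]) ((p : ℝ) ^ m) =
      closedBall 0 ((p : ℝ) ^ m) \ closedBall 0 ((p : ℝ) ^ (m - 1)) := by
  ext x
  simp only [mem_sphere_zero_iff_norm, Set.mem_sdiff, mem_closedBall_zero_iff,
    ← norm_lt_pow_iff_norm_le_pow_sub_one, not_lt, le_antisymm_iff]

lemma closedBall_zero_zpow_eq_insert_iUnion_sphere (n : ℤ) :
    closedBall (0 : ℚ_[p]) ((p : ℝ) ^ n) =
      insert 0 (⋃ k : ℕ, sphere 0 ((p : ℝ) ^ (n - k))) := by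
  have hp1 : (1 : ℝ) < p := by exact_mod_cast hp.out.one_lt
  ext x
  simp only [mem_closedBall_zero_iff, Set.mem_insert_iff, Set.mem_iUnion,
    mem_sphere_zero_iff_norm]
  rcases eq_or_ne x 0 with rfl | hx
  · simp only [norm_zero, true_or, iff_true]
    positivity
  rw [norm_eq_zpow_neg_valuation hx, (zpow_right_strictMono₀ hp1).le_iff_le]
  simp only [hx, false_or, (zpow_right_injective₀ (zero_lt_one.trans hp1) hp1.ne').eq_iff]
  exact ⟨fun h ↦ ⟨(n + x.valuation).toNat, by omega⟩, fun ⟨k, hk⟩ ↦ by omega⟩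

lemma pairwise_disjoint_sphere_zpow (n : ℤ) :
    Pairwise (Disjoint on fun k : ℕ ↦ sphere (0 : ℚ_[p]) ((p : ℝ) ^ (n - k))) := by
  have hp1 : (1 : ℝ) < p := by exact_mod_cast hp.out.one_lt
  intro i j hij
  refine Set.disjoint_left.2 fun x hi hj ↦ hij ?_
  have := zpow_right_injective₀ (zero_lt_one.trans hp1) hp1.ne' ((mem_sphere.1 hi).symm.trans hj)
  omega

section Measure

variable [MeasurableSpace ℚ_[p]] [BorelSpace ℚ_[p]] (μ : Measure ℚ_[p]) [μ.IsAddHaarMeasure]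

lemma addHaar_closedBall_zpow_succ (k : ℤ) :
    μ (closedBall 0 ((p : ℝ) ^ (k + 1))) = p * μ (closedBall 0 ((p : ℝ) ^ k)) := by
  rw [closedBall_zero_zpow_succ_eq_iUnion,
    measure_iUnion (pairwise_disjoint_closedBall_zpow k) fun _ ↦ measurableSet_closedBall]
  simp [Measure.addHaar_closedBall_center]

lemma addHaar_closedBall_zpow (k : ℤ) :
    μ (closedBall 0 ((p : ℝ) ^ k)) = ENNReal.ofReal ((p : ℝ) ^ k) * μ (closedBall 0 1) := by
  have hp0 : (0 : ℝ) < p := by exact_mod_cast hp.out.pos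
  have ofReal_zpow_succ (k : ℤ) :
      ENNReal.ofReal ((p : ℝ) ^ (k + 1)) = p * ENNReal.ofReal ((p : ℝ) ^ k) := by
    rw [zpow_add_one₀ hp0.ne', mul_comm, ENNReal.ofReal_mul hp0.le, ENNReal.ofReal_natCast]
  induction k using Int.induction_on with
  | zero => simp
  | succ k ih => rw [addHaar_closedBall_zpow_succ, ih, ofReal_zpow_succ, mul_assoc]
  | pred k ih =>
    have := addHaar_closedBall_zpow_succ μ (-k - 1)
    rw [sub_add_cancel, ih] at this
    refine (ENNReal.mul_right_inj (by exact_mod_cast hp0.ne') (ENNReal.natCast_ne_top p)).1 ?_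
    rw [← this, ← mul_assoc, ← ofReal_zpow_succ, sub_add_cancel]

lemma addHaar_sphere_zpow (m : ℤ) :
    μ (sphere 0 ((p : ℝ) ^ m)) =
      ENNReal.ofReal ((1 - (p : ℝ)⁻¹) * (p : ℝ) ^ m) * μ (closedBall 0 1) := by
  have hp0 : (0 : ℝ) < p := by exact_mod_cast hp.out.pos
  rw [sphere_zero_zpow_eq_closedBall_sdiff, measure_sdiff
      (closedBall_subset_closedBall (zpow_le_zpow_right₀ (by exact_mod_cast hp.out.one_lt.le)
        (by omega))) measurableSet_closedBall.nullMeasurableSet measure_closedBall_lt_top.ne,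
    addHaar_closedBall_zpow, addHaar_closedBall_zpow,
    ← ENNReal.sub_mul fun _ _ ↦ measure_closedBall_lt_top.ne,
    ← ENNReal.ofReal_sub _ (zpow_nonneg hp0.le _), zpow_sub_one₀ hp0.ne']
  congr 2
  ring

lemma setLIntegral_closedBall_zpow_comp_norm (g : ℝ → ℝ≥0∞) (n : ℤ) :
    ∫⁻ x in closedBall 0 ((p : ℝ) ^ n), g ‖x‖ ∂μ =
      ∑' k : ℕ, g ((p : ℝ) ^ (n - k)) * μ (sphere 0 ((p : ℝ) ^ (n - k))) := by
  rw [closedBall_zero_zpow_eq_insert_iUnion_sphere, setLIntegral_congr (insert_ae_eq_self _ _),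
    lintegral_iUnion (fun _ ↦ isClosed_sphere.measurableSet) (pairwise_disjoint_sphere_zpow n)]
  refine tsum_congr fun k ↦ ?_
  rw [setLIntegral_congr_fun isClosed_sphere.measurableSet
    fun x hx ↦ by rw [mem_sphere_zero_iff_norm.1 hx], setLIntegral_const]

end Measure

end Padic

lemma Real.zpow_sub_natCast_rpow_sub_one_mul_self {b : ℝ} (hb : 0 < b) (α : ℝ) (n : ℤ) (k : ℕ) :
    (b ^ (n - k)) ^ (α - 1) * b ^ (n - k) = b ^ (α * n) * (b ^ (-α)) ^ k := by
  simp only [← Real.rpow_intCast, ← Real.rpow_natCast, ← Real.rpow_mul hb.le, ← Real.rpow_add hb]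
  congr 1
  push_cast
  ring

theorem padic_integral_norm_rpow
    (p : ℕ) [Fact p.Prime]
    [MeasurableSpace ℚ_[p]] [BorelSpace ℚ_[p]]
    (μ : Measure ℚ_[p]) [μ.IsAddHaarMeasure]
    (hμ : μ {x : ℚ_[p] | ‖x‖ ≤ 1} = 1)
    (α : ℝ) (hα : 0 < α) (n : ℤ) :
    ∫ x in {x : ℚ_[p] | ‖x‖ ≤ (p : ℝ) ^ n}, ‖x‖ ^ (α - 1) ∂μ
      = (1 - (p : ℝ)⁻¹) / (1 - (p : ℝ) ^ (-α)) * (p : ℝ) ^ (α * n) := by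
  have hp1 : (1 : ℝ) < p := by exact_mod_cast (Fact.out : p.Prime).one_lt
  have hr0 : 0 ≤ (p : ℝ) ^ (-α) := by positivity
  have hr1 : (p : ℝ) ^ (-α) < 1 := Real.rpow_lt_one_of_one_lt_of_neg hp1 (neg_lt_zero.2 hα)
  have hcoeff : 0 ≤ 1 - (p : ℝ)⁻¹ := sub_nonneg.2 (inv_le_one_of_one_le₀ hp1.le)
  simp only [← mem_closedBall_zero_iff, Set.ofPred_mem_eq] at hμ ⊢
  rw [integral_eq_lintegral_of_nonneg_ae (ae_of_all _ fun _ ↦ by positivity)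
      (measurable_norm.pow_const _).aestronglyMeasurable,
    Padic.setLIntegral_closedBall_zpow_comp_norm μ (fun t ↦ ENNReal.ofReal (t ^ (α - 1))),
    ENNReal.tsum_toReal_eq fun _ ↦ ENNReal.mul_ne_top ENNReal.ofReal_ne_top
      (by simp [Padic.addHaar_sphere_zpow, hμ])]
  calc ∑' k : ℕ, (ENNReal.ofReal (((p : ℝ) ^ (n - k)) ^ (α - 1)) *
          μ (sphere 0 ((p : ℝ) ^ (n - k)))).toReal
      = ∑' k : ℕ, (1 - (p : ℝ)⁻¹) * (p : ℝ) ^ (α * n) * ((p : ℝ) ^ (-α)) ^ k := by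
        refine tsum_congr fun k ↦ ?_
        rw [Padic.addHaar_sphere_zpow, hμ, mul_one,
          ← ENNReal.ofReal_mul (Real.rpow_nonneg (by positivity) _),
          ENNReal.toReal_ofReal (mul_nonneg (by positivity) (mul_nonneg hcoeff (by positivity))),
          mul_left_comm, Real.zpow_sub_natCast_rpow_sub_one_mul_self (by positivity), mul_assoc]
    _ = (1 - (p : ℝ)⁻¹) / (1 - (p : ℝ) ^ (-α)) * (p : ℝ) ^ (α * n) := by
        rw [tsum_mul_left, tsum_geometric_of_lt_one hr0 hr1]
        ring
end

section
/- Let u : ℚ_p → ℂ be the constant function u ≡ 1. Then (I^1 u)(x) = 0 for every x ∈ ℚ_p; that is, ∫_{‖y‖ ≤ ‖x‖} (log‖x - y‖ - log‖y‖) dμ(y) = 0 for every x ≠ 0. -/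
open MeasureTheory

open scoped Classical in
/-- The integration operator `I^1` on `ℚ_p`. -/
noncomputable def Ione (p : ℕ) [Fact p.Prime] [MeasurableSpace ℚ_[p]]
    (μ : Measure ℚ_[p]) (u : ℚ_[p] → ℂ) (x : ℚ_[p]) : ℂ :=
  if x = 0 then 0 else
    (((1 - (p : ℝ)) / ((p : ℝ) * Real.log p) : ℝ) : ℂ) *
      ∫ y in {y : ℚ_[p] | ‖y‖ ≤ ‖x‖},
        ((Real.log ‖x - y‖ - Real.log ‖y‖ : ℝ) : ℂ) * u y ∂μ

theorem Ione_const_eq_zero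
    (p : ℕ) [Fact p.Prime]
    [MeasurableSpace ℚ_[p]] [BorelSpace ℚ_[p]]
    (μ : Measure ℚ_[p]) [μ.IsAddHaarMeasure]
    (hμ : μ {x : ℚ_[p] | ‖x‖ ≤ 1} = 1) :
    (∀ x : ℚ_[p], Ione p μ (fun _ => 1) x = 0) ∧
    (∀ x : ℚ_[p], x ≠ 0 →
      ∫ y in {y : ℚ_[p] | ‖y‖ ≤ ‖x‖},
        (Real.log ‖x - y‖ - Real.log ‖y‖) ∂μ = 0) := by
  have key : ∀ x : ℚ_[p],
      ∫ y in {y : ℚ_[p] | ‖y‖ ≤ ‖x‖},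
        (Real.log ‖x - y‖ - Real.log ‖y‖) ∂μ = 0 := by
    intro x
    set S : Set ℚ_[p] := {y : ℚ_[p] | ‖y‖ ≤ ‖x‖} with hS
    have hmp : MeasurePreserving (fun y : ℚ_[p] => x - y) μ μ :=
      Measure.measurePreserving_sub_left μ x
    have hemb : MeasurableEmbedding (fun y : ℚ_[p] => x - y) :=
      (Homeomorph.subLeft x).measurableEmbedding
    have hpre : (fun y : ℚ_[p] => x - y) ⁻¹' S = S := by
      ext y
      simp only [Set.mem_preimage, hS, Set.mem_setOf_eq]
      constructor
      · intro h
        have h1 : ‖y‖ = ‖x - (x - y)‖ := by rw [sub_sub_cancel]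
        calc ‖y‖ = ‖x + (-(x - y))‖ := by rw [← sub_eq_add_neg, sub_sub_cancel]
          _ ≤ max ‖x‖ ‖-(x - y)‖ := Padic.nonarchimedean _ _
          _ ≤ ‖x‖ := by rw [norm_neg]; exact max_le le_rfl h
      · intro h
        calc ‖x - y‖ = ‖x + (-y)‖ := by rw [sub_eq_add_neg]
          _ ≤ max ‖x‖ ‖-y‖ := Padic.nonarchimedean _ _
          _ ≤ ‖x‖ := by rw [norm_neg]; exact max_le le_rfl h
    have h2 := hmp.setIntegral_preimage_emb hemb
      (fun y => Real.log ‖x - y‖ - Real.log ‖y‖) S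
    rw [hpre] at h2
    simp only [sub_sub_cancel] at h2
    have h3 : ∫ y in S, (Real.log ‖y‖ - Real.log ‖x - y‖) ∂μ
        = - ∫ y in S, (Real.log ‖x - y‖ - Real.log ‖y‖) ∂μ := by
      rw [← integral_neg]
      congr 1
      funext y
      ring
    rw [h3] at h2
    linarith
  refine ⟨?_, fun x _ => key x⟩
  intro x
  unfold Ione
  split_ifs with hx
  · rfl
  · rw [show (fun y : ℚ_[p] =>
        ((Real.log ‖x - y‖ - Real.log ‖y‖ : ℝ) : ℂ) * (fun _ : ℚ_[p] => (1 : ℂ)) y)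
      = fun y : ℚ_[p] => ((Real.log ‖x - y‖ - Real.log ‖y‖ : ℝ) : ℂ) from by
        funext y; simp]
    have h4 : ∫ y in {y : ℚ_[p] | ‖y‖ ≤ ‖x‖},
        ((Real.log ‖x - y‖ - Real.log ‖y‖ : ℝ) : ℂ) ∂μ
        = ((∫ y in {y : ℚ_[p] | ‖y‖ ≤ ‖x‖},
            (Real.log ‖x - y‖ - Real.log ‖y‖) ∂μ : ℝ) : ℂ) := integral_ofReal
    rw [h4, key x]
    simp
end

section
/- Let α > 0, α ≠ 1. There exists a constant A > 0, depending only on p and α, such that for every integer m ≥ 0 there is a constant d_{α,m} with 0 ≤ d_{α,m} ≤ A p^{-αm} such that for every x ∈ ℚ_p, x ≠ 0, one has ∫_{‖y‖ < ‖x‖} | ‖x‖^{α-1} - ‖y‖^{α-1} | · ‖y‖^{αm} dμ(y) = d_{α,m} ‖x‖^{α(m+1)}; explicitly, d_{α,m} = (1 - p^{-1}) · | p^{-αm-1}/(1 - p^{-αm-1}) - p^{-α(m+1)}/(1 - p^{-α(m+1)}) |. -/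
/-!
Up to the null set `{0}`, the ball `‖y‖ < ‖x‖` is the disjoint union of the spheres
`‖y‖ = ‖x‖ p⁻ᵏ⁻¹`, `k ≥ 0`. A sphere `‖y‖ = ‖z‖` has measure `(1 - p⁻¹) ‖z‖`, because the ball
`‖y‖ ≤ ‖z‖` is the disjoint union of the `p` translates of the ball `‖y‖ ≤ ‖p z‖` by `i z`,
`i < p`, and hence has measure `‖z‖`. The integrand is constant on each sphere, and the `k`-th
term is `(1 - p⁻¹) ‖x‖^(α(m+1)) |r₁ᵏ⁺¹ - r₂ᵏ⁺¹|` with `r₁ = p^(-αm-1)`, `r₂ = p^(-α(m+1))`.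
These differences all have the same sign, so the series sums to
`(1 - p⁻¹) ‖x‖^(α(m+1)) |r₁ / (1 - r₁) - r₂ / (1 - r₂)|`.
-/

open MeasureTheory

lemma hasSum_pow_succ {r : ℝ} (h0 : 0 ≤ r) (h1 : r < 1) :
    HasSum (fun k : ℕ => r ^ (k + 1)) (r / (1 - r)) := by
  simpa [pow_succ', div_eq_mul_inv] using (hasSum_geometric_of_lt_one h0 h1).mul_left r

lemma hasSum_abs_pow_succ_sub_pow_succ {a b : ℝ} (ha0 : 0 ≤ a) (ha1 : a < 1)
    (hb0 : 0 ≤ b) (hb1 : b < 1) :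
    HasSum (fun k : ℕ => |a ^ (k + 1) - b ^ (k + 1)|) |a / (1 - a) - b / (1 - b)| := by
  wlog hab : a ≤ b generalizing a b
  · simpa only [abs_sub_comm] using this hb0 hb1 ha0 ha1 (le_of_not_ge hab)
  have hle : a / (1 - a) ≤ b / (1 - b) :=
    div_le_div₀ hb0 hab (by linarith) (by linarith)
  rw [abs_sub_comm, abs_of_nonneg (sub_nonneg.2 hle)]
  refine ((hasSum_pow_succ hb0 hb1).sub (hasSum_pow_succ ha0 ha1)).congr_fun fun k => ?_
  rw [abs_sub_comm, abs_of_nonneg (sub_nonneg.2 (pow_le_pow_left₀ ha0 hab _))]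

lemma div_one_sub_mul_le {c s : ℝ} (hc0 : 0 ≤ c) (hc1 : c ≤ 1) (hs0 : 0 ≤ s) (hs1 : s < 1) :
    c * s / (1 - c * s) ≤ c * (s / (1 - s)) := by
  rw [← mul_div_assoc]
  exact div_le_div_of_nonneg_left (by positivity) (by linarith)
    (by nlinarith [mul_le_of_le_one_left hs0 hc1])

lemma abs_rpow_sub_mul_rpow_mul {X q : ℝ} (hX : 0 < X) (hq : 0 < q) (a b c : ℝ) :
    |X ^ a - (X * q) ^ a| * (X * q) ^ b * (c * (X * q))
      = c * X ^ (a + b + 1) * |q ^ (b + 1) - q ^ (a + b + 1)| := by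
  simp only [Real.mul_rpow hX.le hq.le, Real.rpow_add hX, Real.rpow_add hq, Real.rpow_one]
  rw [show X ^ a - X ^ a * q ^ a = X ^ a * (1 - q ^ a) by ring,
    show q ^ b * q - q ^ a * q ^ b * q = q ^ b * q * (1 - q ^ a) by ring,
    abs_mul, abs_mul, abs_of_pos (Real.rpow_pos_of_pos hX a),
    abs_of_pos (by positivity : 0 < q ^ b * q)]
  ring

/-- The constant `d_{α,m}` of the statement. -/
noncomputable def momentCoeff (P α : ℝ) (m : ℕ) : ℝ :=
  (1 - P⁻¹) * |P ^ (-α * m - 1) / (1 - P ^ (-α * m - 1)) -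
    P ^ (-α * (m + 1)) / (1 - P ^ (-α * (m + 1)))|

lemma momentCoeff_nonneg {P : ℝ} (hP : 1 ≤ P) (α : ℝ) (m : ℕ) : 0 ≤ momentCoeff P α m :=
  mul_nonneg (sub_nonneg.2 (inv_le_one_of_one_le₀ hP)) (abs_nonneg _)

lemma momentCoeff_le {P α : ℝ} (hP : 1 < P) (hα : 0 < α) (m : ℕ) :
    momentCoeff P α m ≤ (P⁻¹ / (1 - P⁻¹) + P ^ (-α) / (1 - P ^ (-α))) * P ^ (-α * m) := by
  have hP0 : 0 < P := zero_lt_one.trans hP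
  set c := P ^ (-α * m)
  have hc0 : 0 ≤ c := Real.rpow_nonneg hP0.le _
  have hc1 : c ≤ 1 :=
    Real.rpow_le_one_of_one_le_of_nonpos hP.le (by nlinarith [m.cast_nonneg (α := ℝ)])
  have hs₁ : 0 ≤ P⁻¹ ∧ P⁻¹ < 1 := ⟨inv_nonneg.2 hP0.le, inv_lt_one_of_one_lt₀ hP⟩
  have hs₂ : 0 ≤ P ^ (-α) ∧ P ^ (-α) < 1 :=
    ⟨Real.rpow_nonneg hP0.le _, Real.rpow_lt_one_of_one_lt_of_neg hP (by linarith)⟩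
  have hnonneg {s : ℝ} (hs : 0 ≤ s ∧ s < 1) : 0 ≤ c * s / (1 - c * s) :=
    div_nonneg (mul_nonneg hc0 hs.1)
      (sub_nonneg.2 ((mul_le_of_le_one_left hs.1 hc1).trans hs.2.le))
  have h₁ : P ^ (-α * m - 1) = c * P⁻¹ := by
    rw [sub_eq_add_neg, Real.rpow_add hP0, Real.rpow_neg_one]
  have h₂ : P ^ (-α * (m + 1)) = c * P ^ (-α) := by
    rw [mul_add, mul_one, Real.rpow_add hP0]
  rw [momentCoeff, h₁, h₂]
  calc (1 - P⁻¹) * |c * P⁻¹ / (1 - c * P⁻¹) - c * P ^ (-α) / (1 - c * P ^ (-α))|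
      ≤ |c * P⁻¹ / (1 - c * P⁻¹) - c * P ^ (-α) / (1 - c * P ^ (-α))| :=
        mul_le_of_le_one_left (abs_nonneg _) (by linarith)
    _ ≤ c * P⁻¹ / (1 - c * P⁻¹) + c * P ^ (-α) / (1 - c * P ^ (-α)) := by
        simpa only [abs_of_nonneg (hnonneg hs₁), abs_of_nonneg (hnonneg hs₂)] using
          abs_sub (c * P⁻¹ / (1 - c * P⁻¹)) (c * P ^ (-α) / (1 - c * P ^ (-α)))
    _ ≤ c * (P⁻¹ / (1 - P⁻¹)) + c * (P ^ (-α) / (1 - P ^ (-α))) :=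
        add_le_add (div_one_sub_mul_le hc0 hc1 hs₁.1 hs₁.2) (div_one_sub_mul_le hc0 hc1 hs₂.1 hs₂.2)
    _ = _ := by ring

namespace Padic

variable {p : ℕ} [Fact p.Prime]

lemma norm_lt_iff_le_norm_p_mul {y z : ℚ_[p]} (hz : z ≠ 0) :
    ‖y‖ < ‖z‖ ↔ ‖y‖ ≤ ‖(p : ℚ_[p]) * z‖ := by
  rw [norm_mul, norm_p, norm_eq_zpow_neg_valuation hz, norm_lt_pow_iff_norm_le_pow_sub_one,
    zpow_sub_one₀ (by exact_mod_cast (Fact.out : p.Prime).ne_zero), mul_comm]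

lemma eq_of_norm_natCast_sub_lt_one {i j : ℕ} (hi : i < p) (hj : j < p)
    (h : ‖(i : ℚ_[p]) - j‖ < 1) : i = j := by
  rw [← Int.cast_natCast, ← Int.cast_natCast (R := ℚ_[p]) j, ← Int.cast_sub,
    norm_intCast_lt_one_iff] at h
  exact (Nat.modEq_iff_dvd.2 h).eq_of_lt_of_lt hj hi |>.symm

lemma setOf_norm_le_eq_iUnion {z : ℚ_[p]} (hz : z ≠ 0) :
    {y : ℚ_[p] | ‖y‖ ≤ ‖z‖} =
      ⋃ i : Fin p, (fun y => y + -(i * z)) ⁻¹' {y | ‖y‖ ≤ ‖(p : ℚ_[p]) * z‖} := by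
  ext y
  simp only [Set.mem_ofPred_eq, Set.mem_iUnion, Set.mem_preimage, ← sub_eq_add_neg,
    ← norm_lt_iff_le_norm_p_mul hz]
  constructor
  · intro hy
    have hyz : ‖y / z‖ ≤ 1 := by
      rw [norm_div]; exact div_le_one_of_le₀ hy (norm_nonneg z)
    obtain ⟨i, hi, hmem⟩ := PadicInt.exists_mem_range (⟨y / z, hyz⟩ : ℤ_[p])
    rw [IsLocalRing.mem_maximalIdeal, PadicInt.mem_nonunits] at hmem
    replace hmem : ‖y / z - i‖ < 1 := hmem
    refine ⟨⟨i, hi⟩, ?_⟩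
    calc ‖y - i * z‖ = ‖y / z - i‖ * ‖z‖ := by
          rw [← norm_mul, sub_mul, div_mul_cancel₀ y hz]
      _ < 1 * ‖z‖ := mul_lt_mul_of_pos_right hmem (norm_pos_iff.2 hz)
      _ = ‖z‖ := one_mul _
  · rintro ⟨i, hi⟩
    calc ‖y‖ = ‖(y - i * z) + i * z‖ := by rw [sub_add_cancel]
      _ ≤ max ‖y - i * z‖ ‖(i : ℚ_[p]) * z‖ := nonarchimedean _ _
      _ ≤ ‖z‖ := max_le hi.le (by
          rw [norm_mul]
          exact mul_le_of_le_one_left (norm_nonneg z) (IsUltrametricDist.norm_natCast_le_one _ _))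

lemma pairwise_disjoint_preimage_add {z : ℚ_[p]} (hz : z ≠ 0) :
    Pairwise (Function.onFun Disjoint fun i : Fin p =>
      (fun y => y + -(i * z)) ⁻¹' {y : ℚ_[p] | ‖y‖ ≤ ‖(p : ℚ_[p]) * z‖}) := by
  intro i j hij
  refine Set.disjoint_left.2 fun y hi hj => hij (Fin.ext ?_)
  simp only [Set.mem_preimage, Set.mem_ofPred_eq, ← sub_eq_add_neg,
    ← norm_lt_iff_le_norm_p_mul hz] at hi hj
  refine eq_of_norm_natCast_sub_lt_one i.2 j.2 ?_
  have : ‖((i : ℚ_[p]) - j) * z‖ < ‖z‖ := by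
    calc ‖((i : ℚ_[p]) - j) * z‖ = ‖(y - j * z) - (y - i * z)‖ := by ring_nf
      _ ≤ max ‖y - j * z‖ ‖y - i * z‖ := by
          rw [sub_eq_add_neg, ← norm_neg (y - i * z)]; exact nonarchimedean _ _
      _ < ‖z‖ := max_lt hj hi
  rwa [norm_mul, mul_lt_iff_lt_one_left (norm_pos_iff.2 hz)] at this

lemma natCast_mul_ofReal_norm_p_mul (z : ℚ_[p]) :
    (p : ENNReal) * ENNReal.ofReal ‖(p : ℚ_[p]) * z‖ = ENNReal.ofReal ‖z‖ := by
  have hp : (0 : ℝ) < p := by exact_mod_cast (Fact.out : p.Prime).pos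
  rw [← ENNReal.ofReal_natCast, ← ENNReal.ofReal_mul hp.le, norm_mul, norm_p,
    mul_inv_cancel_left₀ hp.ne']

lemma setOf_norm_lt_eq_insert_iUnion {x : ℚ_[p]} (hx : x ≠ 0) :
    {y : ℚ_[p] | ‖y‖ < ‖x‖} = insert 0 (⋃ k : ℕ, {y | ‖y‖ = ‖x * (p : ℚ_[p]) ^ (k + 1)‖}) := by
  ext y
  rcases eq_or_ne y 0 with rfl | hy
  · simpa using hx
  have hp : 1 < (p : ℝ) := by exact_mod_cast (Fact.out : p.Prime).one_lt
  simp only [Set.mem_ofPred_eq, Set.mem_insert_iff, hy, Set.mem_iUnion, false_or, norm_mul,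
    norm_p_pow, norm_eq_zpow_neg_valuation hx, norm_eq_zpow_neg_valuation hy,
    ← zpow_add₀ (zero_lt_one.trans hp).ne', zpow_lt_zpow_iff_right₀ hp,
    zpow_right_inj₀ (zero_lt_one.trans hp) hp.ne']
  constructor
  · intro h
    exact ⟨(y.valuation - x.valuation - 1).toNat, by omega⟩
  · rintro ⟨k, hk⟩
    omega

variable [MeasurableSpace ℚ_[p]] [BorelSpace ℚ_[p]] {μ : Measure ℚ_[p]} [μ.IsAddHaarMeasure]

lemma measure_setOf_norm_le_eq_mul {z : ℚ_[p]} (hz : z ≠ 0) :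
    μ {y | ‖y‖ ≤ ‖z‖} = p * μ {y | ‖y‖ ≤ ‖(p : ℚ_[p]) * z‖} := by
  have hmeas : MeasurableSet {y : ℚ_[p] | ‖y‖ ≤ ‖(p : ℚ_[p]) * z‖} :=
    measurableSet_le measurable_norm measurable_const
  rw [setOf_norm_le_eq_iUnion hz, measure_iUnion (pairwise_disjoint_preimage_add hz)
    fun i => hmeas.preimage (measurable_add_const _)]
  simp only [measure_preimage_add_right, tsum_fintype, Finset.sum_const, Finset.card_univ,
    Fintype.card_fin, nsmul_eq_mul]

lemma measure_setOf_norm_le (hμ : μ {x | ‖x‖ ≤ 1} = 1) (z : ℚ_[p]) :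
    μ {y | ‖y‖ ≤ ‖z‖} = ENNReal.ofReal ‖z‖ := by
  have hp0 : (p : ENNReal) ≠ 0 := by exact_mod_cast (Fact.out : p.Prime).ne_zero
  have step : ∀ w : ℚ_[p], w ≠ 0 → (μ {y | ‖y‖ ≤ ‖w‖} = ENNReal.ofReal ‖w‖ ↔
      μ {y | ‖y‖ ≤ ‖(p : ℚ_[p]) * w‖} = ENNReal.ofReal ‖(p : ℚ_[p]) * w‖) := fun w hw => by
    rw [measure_setOf_norm_le_eq_mul hw, ← natCast_mul_ofReal_norm_p_mul w,
      ENNReal.mul_right_inj hp0 (ENNReal.natCast_ne_top p)]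
  have hp : (p : ℚ_[p]) ≠ 0 := by exact_mod_cast (Fact.out : p.Prime).ne_zero
  have hzpow : ∀ n : ℤ, μ {y | ‖y‖ ≤ ‖(p : ℚ_[p]) ^ n‖} = ENNReal.ofReal ‖(p : ℚ_[p]) ^ n‖ := by
    intro n
    induction n using Int.induction_on with
    | zero => simpa using hμ
    | succ n ih => rwa [zpow_add_one₀ hp, mul_comm, ← step _ (zpow_ne_zero _ hp)]
    | pred n ih =>
        have hpn : (p : ℚ_[p]) ^ (-(n : ℤ)) = p * p ^ (-(n : ℤ) - 1) := by
          rw [zpow_sub_one₀ hp, mul_comm, inv_mul_cancel_right₀ hp]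
        rwa [hpn, ← step _ (zpow_ne_zero _ hp)] at ih
  rcases eq_or_ne z 0 with rfl | hz
  · simp [measure_singleton]
  · rw [norm_eq_zpow_neg_valuation hz, ← norm_p_zpow]
    exact hzpow _

lemma measure_setOf_norm_eq (hμ : μ {x | ‖x‖ ≤ 1} = 1) {z : ℚ_[p]} (hz : z ≠ 0) :
    μ {y | ‖y‖ = ‖z‖} = ENNReal.ofReal ((1 - (p : ℝ)⁻¹) * ‖z‖) := by
  have hsph : {y : ℚ_[p] | ‖y‖ = ‖z‖} = {y | ‖y‖ ≤ ‖z‖} \ {y | ‖y‖ ≤ ‖(p : ℚ_[p]) * z‖} := by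
    ext y
    simp only [Set.mem_ofPred_eq, Set.mem_sdiff, ← norm_lt_iff_le_norm_p_mul hz, not_lt]
    exact ⟨fun h => ⟨h.le, h.ge⟩, fun h => le_antisymm h.1 h.2⟩
  have hsub : {y : ℚ_[p] | ‖y‖ ≤ ‖(p : ℚ_[p]) * z‖} ⊆ {y | ‖y‖ ≤ ‖z‖} := fun y hy =>
    ((norm_lt_iff_le_norm_p_mul hz).2 hy).le
  rw [hsph, measure_sdiff hsub (measurableSet_le measurable_norm measurable_const).nullMeasurableSet
    (by rw [measure_setOf_norm_le hμ]; exact ENNReal.ofReal_ne_top),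
    measure_setOf_norm_le hμ, measure_setOf_norm_le hμ, ← ENNReal.ofReal_sub _ (norm_nonneg _),
    norm_mul, norm_p, sub_mul, one_mul]

lemma setIntegral_norm_lt_eq_of_hasSum (hμ : μ {x | ‖x‖ ≤ 1} = 1) {g : ℝ → ℝ}
    (hg : Measurable g) (hg0 : ∀ t, 0 ≤ t → 0 ≤ g t) {x : ℚ_[p]} (hx : x ≠ 0) {S : ℝ}
    (hS : HasSum (fun k : ℕ => g ‖x * (p : ℚ_[p]) ^ (k + 1)‖ *
      ((1 - (p : ℝ)⁻¹) * ‖x * (p : ℚ_[p]) ^ (k + 1)‖)) S) :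
    ∫ y in {y | ‖y‖ < ‖x‖}, g ‖y‖ ∂μ = S := by
  set sph : ℕ → Set ℚ_[p] := fun k => {y | ‖y‖ = ‖x * (p : ℚ_[p]) ^ (k + 1)‖}
  have hp : (p : ℚ_[p]) ≠ 0 := by exact_mod_cast (Fact.out : p.Prime).ne_zero
  have hmeas (k : ℕ) : MeasurableSet (sph k) :=
    measurableSet_eq_fun measurable_norm measurable_const
  have hdisj : Pairwise (Function.onFun Disjoint sph) := by
    intro i j hij
    refine Set.disjoint_left.2 fun y (hi : ‖y‖ = _) (hj : ‖y‖ = _) => hij ?_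
    have hp1 : ‖(p : ℚ_[p])‖ < 1 := norm_p_lt_one
    rw [hi, norm_mul, norm_mul, norm_pow, norm_pow, mul_right_inj' (norm_ne_zero_iff.2 hx)] at hj
    exact Nat.succ_injective ((pow_right_strictAnti₀ (norm_pos_iff.2 hp) hp1).injective hj)
  have hterm (k : ℕ) : ∫⁻ y in sph k, ENNReal.ofReal (g ‖y‖) ∂μ = ENNReal.ofReal
      (g ‖x * (p : ℚ_[p]) ^ (k + 1)‖ * ((1 - (p : ℝ)⁻¹) * ‖x * (p : ℚ_[p]) ^ (k + 1)‖)) := by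
    rw [setLIntegral_congr_fun (hmeas k) fun y (hy : ‖y‖ = _) => by rw [hy], setLIntegral_const,
      measure_setOf_norm_eq hμ (mul_ne_zero hx (pow_ne_zero _ hp)),
      ← ENNReal.ofReal_mul (hg0 _ (norm_nonneg _))]
  have hnn (k : ℕ) : 0 ≤ g ‖x * (p : ℚ_[p]) ^ (k + 1)‖ *
      ((1 - (p : ℝ)⁻¹) * ‖x * (p : ℚ_[p]) ^ (k + 1)‖) :=
    mul_nonneg (hg0 _ (norm_nonneg _)) (mul_nonneg (sub_nonneg.2 (inv_le_one_of_one_le₀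
      (by exact_mod_cast (Fact.out : p.Prime).one_le))) (norm_nonneg _))
  rw [integral_eq_lintegral_of_nonneg_ae (ae_of_all _ fun y => hg0 _ (norm_nonneg y))
      (hg.comp measurable_norm).aestronglyMeasurable,
    setOf_norm_lt_eq_insert_iUnion hx, setLIntegral_congr (insert_ae_eq_self _ _),
    lintegral_iUnion hmeas hdisj]
  simp only [hterm]
  rw [← ENNReal.ofReal_tsum_of_nonneg hnn hS.summable, hS.tsum_eq,
    ENNReal.toReal_ofReal (hS.nonneg hnn)]

lemma setIntegral_kernel_moment (hμ : μ {x | ‖x‖ ≤ 1} = 1) {α : ℝ} (hα : 0 < α) (m : ℕ)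
    {x : ℚ_[p]} (hx : x ≠ 0) :
    ∫ y in {y : ℚ_[p] | ‖y‖ < ‖x‖}, |‖x‖ ^ (α - 1) - ‖y‖ ^ (α - 1)| * ‖y‖ ^ (α * m) ∂μ
      = momentCoeff p α m * ‖x‖ ^ (α * (m + 1)) := by
  have hP : 1 < (p : ℝ) := by exact_mod_cast (Fact.out : p.Prime).one_lt
  have hP0 : (0 : ℝ) ≤ p := zero_le_one.trans hP.le
  have hm : (0 : ℝ) ≤ m := m.cast_nonneg
  have hsum := (hasSum_abs_pow_succ_sub_pow_succ (Real.rpow_nonneg hP0 (-α * m - 1))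
    (Real.rpow_lt_one_of_one_lt_of_neg hP (by nlinarith)) (Real.rpow_nonneg hP0 (-α * (m + 1)))
    (Real.rpow_lt_one_of_one_lt_of_neg hP (by nlinarith))).mul_left
      ((1 - (p : ℝ)⁻¹) * ‖x‖ ^ (α * (m + 1)))
  rw [show (1 - (p : ℝ)⁻¹) * ‖x‖ ^ (α * (m + 1)) * |_| = momentCoeff p α m * ‖x‖ ^ (α * (m + 1))
    by rw [momentCoeff]; ring] at hsum
  refine setIntegral_norm_lt_eq_of_hasSum hμ
    (g := fun t => |‖x‖ ^ (α - 1) - t ^ (α - 1)| * t ^ (α * m)) (by fun_prop)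
    (fun t ht => by positivity) hx
    (hsum.congr_fun fun k => ?_)
  have hpow (s : ℝ) : (((p : ℝ)⁻¹) ^ (k + 1)) ^ s = ((p : ℝ) ^ (-s)) ^ (k + 1) := by
    rw [← Real.rpow_pow_comm (inv_nonneg.2 hP0), Real.inv_rpow hP0, Real.rpow_neg hP0]
  rw [norm_mul, norm_pow, norm_p, abs_rpow_sub_mul_rpow_mul (norm_pos_iff.2 hx)
    (by positivity), hpow, hpow]
  ring_nf

end Padic

theorem kernel_moment_integral_general
    (p : ℕ) [Fact p.Prime]
    [MeasurableSpace ℚ_[p]] [BorelSpace ℚ_[p]]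
    (μ : Measure ℚ_[p]) [μ.IsAddHaarMeasure]
    (hμ : μ {x : ℚ_[p] | ‖x‖ ≤ 1} = 1)
    (α : ℝ) (hα : 0 < α) :
    ∃ A : ℝ, 0 < A ∧ ∀ m : ℕ,
      0 ≤ (1 - (p : ℝ)⁻¹) *
          |(p : ℝ) ^ (-α * m - 1) / (1 - (p : ℝ) ^ (-α * m - 1)) -
            (p : ℝ) ^ (-α * (m + 1)) / (1 - (p : ℝ) ^ (-α * (m + 1)))| ∧
      (1 - (p : ℝ)⁻¹) *
          |(p : ℝ) ^ (-α * m - 1) / (1 - (p : ℝ) ^ (-α * m - 1)) -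
            (p : ℝ) ^ (-α * (m + 1)) / (1 - (p : ℝ) ^ (-α * (m + 1)))|
        ≤ A * (p : ℝ) ^ (-α * m) ∧
      ∀ x : ℚ_[p], x ≠ 0 →
        ∫ y in {y : ℚ_[p] | ‖y‖ < ‖x‖},
            |‖x‖ ^ (α - 1) - ‖y‖ ^ (α - 1)| * ‖y‖ ^ (α * m) ∂μ
          = (1 - (p : ℝ)⁻¹) *
              |(p : ℝ) ^ (-α * m - 1) / (1 - (p : ℝ) ^ (-α * m - 1)) -
                (p : ℝ) ^ (-α * (m + 1)) / (1 - (p : ℝ) ^ (-α * (m + 1)))| *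
              ‖x‖ ^ (α * (m + 1)) := by
  have hP : 1 < (p : ℝ) := by exact_mod_cast (Fact.out : p.Prime).one_lt
  have hA : 0 < (p : ℝ)⁻¹ / (1 - (p : ℝ)⁻¹) + (p : ℝ) ^ (-α) / (1 - (p : ℝ) ^ (-α)) :=
    add_pos (div_pos (inv_pos.2 (zero_lt_one.trans hP)) (sub_pos.2 (inv_lt_one_of_one_lt₀ hP)))
      (div_pos (Real.rpow_pos_of_pos (zero_lt_one.trans hP) _)
        (sub_pos.2 (Real.rpow_lt_one_of_one_lt_of_neg hP (neg_neg_of_pos hα))))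
  exact ⟨_, hA, fun m => ⟨momentCoeff_nonneg hP.le α m, momentCoeff_le hP hα m,
    fun x hx => Padic.setIntegral_kernel_moment hμ hα m hx⟩⟩

theorem kernel_moment_integral
    (p : ℕ) [Fact p.Prime]
    [MeasurableSpace ℚ_[p]] [BorelSpace ℚ_[p]]
    (μ : Measure ℚ_[p]) [μ.IsAddHaarMeasure]
    (hμ : μ {x : ℚ_[p] | ‖x‖ ≤ 1} = 1)
    (α : ℝ) (hα : 0 < α) (hα1 : α ≠ 1) :
    ∃ A : ℝ, 0 < A ∧ ∀ m : ℕ,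
      0 ≤ (1 - (p : ℝ)⁻¹) *
          |(p : ℝ) ^ (-α * m - 1) / (1 - (p : ℝ) ^ (-α * m - 1)) -
            (p : ℝ) ^ (-α * (m + 1)) / (1 - (p : ℝ) ^ (-α * (m + 1)))| ∧
      (1 - (p : ℝ)⁻¹) *
          |(p : ℝ) ^ (-α * m - 1) / (1 - (p : ℝ) ^ (-α * m - 1)) -
            (p : ℝ) ^ (-α * (m + 1)) / (1 - (p : ℝ) ^ (-α * (m + 1)))|
        ≤ A * (p : ℝ) ^ (-α * m) ∧
      ∀ x : ℚ_[p], x ≠ 0 →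
        ∫ y in {y : ℚ_[p] | ‖y‖ < ‖x‖},
            |‖x‖ ^ (α - 1) - ‖y‖ ^ (α - 1)| * ‖y‖ ^ (α * m) ∂μ
          = (1 - (p : ℝ)⁻¹) *
              |(p : ℝ) ^ (-α * m - 1) / (1 - (p : ℝ) ^ (-α * m - 1)) -
                (p : ℝ) ^ (-α * (m + 1)) / (1 - (p : ℝ) ^ (-α * (m + 1)))| *
              ‖x‖ ^ (α * (m + 1)) :=
  kernel_moment_integral_general p μ hμ α hα
end

section
/- For every integer m ≥ 0 and every x ∈ ℚ_p, x ≠ 0, one has ∫_{‖y‖ < ‖x‖} (log‖x‖ - log‖y‖) · ‖y‖^m dμ(y) = d_{1,m} ‖x‖^{m+1}, where d_{1,m} = (1 - 1/p)(log p) · p^{-(m+1)}/(1 - p^{-(m+1)})^2. In particular there exists A > 0 with d_{1,m} ≤ A p^{-m} for all m ≥ 0. -/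
/-!
The Haar modulus of `ℚ_[p]` is the `p`-adic norm: units of `ℤ_[p]` preserve `ℤ_[p]`, and
`ℤ_[p]` is the disjoint union of the `p` translates `c + pℤ_[p]`, `0 ≤ c < p`, so multiplication
by `p` scales measures by `p⁻¹`. Hence the sphere `‖y‖ = r` (for `r` a value of the norm) has
measure `(1 - p⁻¹) r`. On the sphere `‖y‖ = ‖x‖ p⁻ʲ`, `j ≥ 1`, the integrand is the constant
`j log p (‖x‖ p⁻ʲ)ᵐ`, so the integral is `(1 - p⁻¹) log p ‖x‖ᵐ⁺¹ ∑ⱼ j qʲ` with `q = p⁻⁽ᵐ⁺¹⁾`,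
and `∑ⱼ j qʲ = q / (1 - q)²`. The bound follows from `1 - q ≥ 1 - p⁻¹`.
-/

open MeasureTheory Metric Function
open scoped Pointwise NNReal ENNReal

theorem MeasureTheory.hasSum_setIntegral_iUnion_of_eqOn_const {X E ι : Type*}
    [MeasurableSpace X] [NormedAddCommGroup E] [NormedSpace ℝ E] [CompleteSpace E] [Countable ι]
    {μ : Measure X} {s : ι → Set X} {f : X → E} {c : ι → E}
    (hs : ∀ i, MeasurableSet (s i)) (hd : Pairwise (Disjoint on s))
    (hμ : ∀ i, μ (s i) ≠ ⊤) (hf : ∀ i, Set.EqOn f (fun _ => c i) (s i))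
    (hc : Summable fun i => μ.real (s i) * ‖c i‖) :
    HasSum (fun i => μ.real (s i) • c i) (∫ x in ⋃ i, s i, f x ∂μ) := by
  have hint : ∀ i, IntegrableOn f (s i) μ := fun i =>
    (integrableOn_const (hμ i)).congr_fun (hf i).symm (hs i)
  have hnorm : ∀ i, ∫ x in s i, ‖f x‖ ∂μ = μ.real (s i) * ‖c i‖ := fun i => by
    rw [setIntegral_congr_fun (hs i) fun x hx => congrArg norm (hf i hx), setIntegral_const,
      smul_eq_mul]
  have hconst : ∀ i, ∫ x in s i, f x ∂μ = μ.real (s i) • c i := fun i => by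
    rw [setIntegral_congr_fun (hs i) (hf i), setIntegral_const]
  simpa only [hconst] using hasSum_integral_iUnion hs hd
    (integrableOn_iUnion_of_summable_integral_norm hint (by simpa only [hnorm] using hc))

theorem hasSum_succ_mul_pow_succ {𝕜 : Type*} [NormedDivisionRing 𝕜] {q : 𝕜}
    (hq : ‖q‖ < 1) :
    HasSum (fun j : ℕ => ((j : 𝕜) + 1) * q ^ (j + 1)) (q / (1 - q) ^ 2) := by
  simpa using (hasSum_nat_add_iff' (f := fun n : ℕ => (n : 𝕜) * q ^ n) 1).mpr
    (hasSum_coe_mul_geometric_of_norm_lt_one hq)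

namespace Padic

/-- The constant `d_{1,m}`. -/
noncomputable def logMomentConst (p m : ℕ) : ℝ :=
  (1 - 1 / (p : ℝ)) * Real.log p * ((p : ℝ) ^ (m + 1))⁻¹
    / (1 - ((p : ℝ) ^ (m + 1))⁻¹) ^ 2

variable {p : ℕ} [Fact p.Prime]

theorem closedBall_zero_one_eq_biUnion_ball :
    closedBall (0 : ℚ_[p]) 1 = ⋃ c ∈ Finset.range p, ball (c : ℚ_[p]) 1 := by
  ext y
  simp only [mem_closedBall_zero_iff, Set.mem_iUnion, Finset.mem_range, mem_ball, dist_eq_norm]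
  constructor
  · intro hy
    obtain ⟨c, hc, hyc⟩ := PadicInt.exists_mem_range (⟨y, hy⟩ : ℤ_[p])
    exact ⟨c, hc, PadicInt.mem_nonunits.mp hyc⟩
  · rintro ⟨c, -, hyc⟩
    simpa using (IsUltrametricDist.norm_add_le_max (y - c) c).trans
      (max_le hyc.le (IsUltrametricDist.norm_natCast_le_one ℚ_[p] c))

theorem pairwiseDisjoint_ball_natCast :
    (Finset.range p : Set ℕ).PairwiseDisjoint fun c => ball (c : ℚ_[p]) 1 := by
  intro c hc d hd hcd
  simp only [Finset.coe_range, Set.mem_Iio] at hc hd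
  refine Set.disjoint_left.mpr fun y hyc hyd => hcd ?_
  rw [mem_ball, dist_eq_norm] at hyc hyd
  have hlt : ‖((c - d : ℤ) : ℚ_[p])‖ < 1 := by
    have : ((c - d : ℤ) : ℚ_[p]) = (y - d) + -(y - c) := by push_cast; ring
    rw [this]
    exact (IsUltrametricDist.norm_add_le_max _ _).trans_lt (max_lt hyd (by rwa [norm_neg]))
  have := Int.eq_zero_of_abs_lt_dvd (norm_intCast_lt_one_iff.mp hlt) (by rw [abs_lt]; omega)
  omega

theorem ball_zero_one_eq_closedBall : ball (0 : ℚ_[p]) 1 = closedBall 0 (p : ℝ)⁻¹ := by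
  ext y
  rw [mem_ball_zero_iff, mem_closedBall_zero_iff, ← zpow_neg_one,
    norm_le_pow_iff_norm_lt_pow_add_one, neg_add_cancel, zpow_zero]

theorem measure_closedBall_zero_one_eq_mul [MeasurableSpace ℚ_[p]] [BorelSpace ℚ_[p]]
    (μ : Measure ℚ_[p]) [μ.IsAddHaarMeasure] : μ (closedBall 0 1) = p * μ (ball 0 1) := by
  rw [closedBall_zero_one_eq_biUnion_ball,
    measure_biUnion_finset pairwiseDisjoint_ball_natCast fun _ _ => measurableSet_ball]
  simp [Measure.addHaar_ball_center]

theorem distribHaarChar_eq_one_of_norm_eq_one {u : ℚ_[p]ˣ} (hu : ‖(u : ℚ_[p])‖ = 1) :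
    distribHaarChar ℚ_[p] u = 1 := by
  borelize ℚ_[p]
  have hsmul : u • closedBall (0 : ℚ_[p]) 1 = closedBall 0 1 :=
    (smul_closedBall (u : ℚ_[p]) (0 : ℚ_[p]) zero_le_one).trans (by simp [hu])
  exact distribHaarChar_eq_of_measure_smul_eq_mul (μ := Measure.addHaar)
    (measure_closedBall_pos _ (0 : ℚ_[p]) one_pos).ne' measure_closedBall_lt_top.ne
    (by simp [hsmul])

theorem distribHaarChar_p (hp : (p : ℚ_[p]) ≠ 0) :
    distribHaarChar ℚ_[p] (Units.mk0 (p : ℚ_[p]) hp) = (p : ℝ≥0)⁻¹ := by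
  borelize ℚ_[p]
  have hp' : (p : ℝ≥0∞) ≠ 0 := by exact_mod_cast (Fact.out : p.Prime).ne_zero
  have hsmul : Units.mk0 (p : ℚ_[p]) hp • closedBall (0 : ℚ_[p]) 1 = ball 0 1 :=
    (smul_closedBall (p : ℚ_[p]) (0 : ℚ_[p]) zero_le_one).trans
      (by simp [norm_p, ball_zero_one_eq_closedBall])
  refine distribHaarChar_eq_of_measure_smul_eq_mul (μ := Measure.addHaar)
    (measure_closedBall_pos _ (0 : ℚ_[p]) one_pos).ne' measure_closedBall_lt_top.ne ?_
  rw [hsmul, measure_closedBall_zero_one_eq_mul, ← mul_assoc,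
    ENNReal.coe_inv (by simpa using hp'), ENNReal.coe_natCast,
    ENNReal.inv_mul_cancel hp' (ENNReal.natCast_ne_top p), one_mul]

theorem distribHaarChar_eq_nnnorm (a : ℚ_[p]ˣ) :
    distribHaarChar ℚ_[p] a = ‖(a : ℚ_[p])‖₊ := by
  have hp : (p : ℚ_[p]) ≠ 0 := by exact_mod_cast (Fact.out : p.Prime).ne_zero
  have hp' : (p : ℝ) ≠ 0 := by exact_mod_cast (Fact.out : p.Prime).ne_zero
  set v := (a : ℚ_[p]).valuation
  set π := Units.mk0 (p : ℚ_[p]) hp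
  have hnorm : ‖(a : ℚ_[p])‖ = (p : ℝ) ^ (-v) := norm_eq_zpow_neg_valuation a.ne_zero
  have hunit : ‖((a * π ^ (-v) : ℚ_[p]ˣ) : ℚ_[p])‖ = 1 := by
    simp only [π, Units.val_mul, Units.val_zpow_eq_zpow_val, Units.val_mk0, norm_mul,
      norm_zpow, hnorm, norm_p]
    rw [inv_zpow', ← zpow_add₀ hp', neg_neg, neg_add_cancel, zpow_zero]
  calc distribHaarChar ℚ_[p] a
      = distribHaarChar ℚ_[p] (a * π ^ (-v)) * distribHaarChar ℚ_[p] π ^ v := by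
        rw [← map_zpow, ← map_mul, mul_assoc, ← zpow_add, neg_add_cancel, zpow_zero, mul_one]
    _ = ‖(a : ℚ_[p])‖₊ := by
        rw [distribHaarChar_eq_one_of_norm_eq_one hunit, distribHaarChar_p, one_mul]
        ext
        simp [hnorm]

theorem exists_norm_eq_norm_p_pow_succ {z : ℚ_[p]} (hz : z ≠ 0) (hz1 : ‖z‖ < 1) :
    ∃ j : ℕ, ‖z‖ = ‖(p : ℚ_[p]) ^ (j + 1)‖ := by
  have hp1 : (1 : ℝ) < p := by exact_mod_cast (Fact.out : p.Prime).one_lt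
  rw [norm_eq_zpow_neg_valuation hz] at hz1 ⊢
  have hv : 0 < z.valuation := by simpa using (zpow_lt_one_iff_right₀ hp1).mp hz1
  refine ⟨(z.valuation - 1).toNat, ?_⟩
  rw [norm_p_pow]
  congr 2
  omega

theorem ball_zero_norm_sdiff_zero_eq_iUnion_sphere {x : ℚ_[p]} (hx : x ≠ 0) :
    ball (0 : ℚ_[p]) ‖x‖ \ {0} = ⋃ j : ℕ, sphere 0 ‖x * (p : ℚ_[p]) ^ (j + 1)‖ := by
  have hx' : 0 < ‖x‖ := norm_pos_iff.mpr hx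
  ext y
  simp only [Set.mem_sdiff, mem_ball_zero_iff, Set.mem_singleton_iff, Set.mem_iUnion,
    mem_sphere_zero_iff_norm]
  constructor
  · rintro ⟨hyx, hy⟩
    obtain ⟨j, hj⟩ := exists_norm_eq_norm_p_pow_succ (div_ne_zero hy hx)
      (by rwa [norm_div, div_lt_one hx'])
    refine ⟨j, ?_⟩
    rw [norm_mul, ← hj, norm_div, mul_div_cancel₀ _ hx'.ne']
  · rintro ⟨j, hj⟩
    have hpj : ‖(p : ℚ_[p]) ^ (j + 1)‖ < 1 := by
      rw [norm_pow]
      exact pow_lt_one₀ (norm_nonneg _) norm_p_lt_one (Nat.succ_ne_zero j)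
    refine ⟨?_, ?_⟩
    · rw [hj, norm_mul]
      exact mul_lt_of_lt_one_right hx' hpj
    · rintro rfl
      rw [norm_zero, eq_comm, norm_eq_zero] at hj
      exact mul_ne_zero hx (pow_ne_zero _ (Nat.cast_ne_zero.mpr (Fact.out : p.Prime).ne_zero)) hj

theorem norm_mul_p_pow_succ_injective {x : ℚ_[p]} (hx : x ≠ 0) :
    Function.Injective fun j : ℕ => ‖x * (p : ℚ_[p]) ^ (j + 1)‖ := by
  have hp1 : (1 : ℝ) < p := by exact_mod_cast (Fact.out : p.Prime).one_lt
  intro i j hij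
  simp only [norm_mul, norm_p_pow, mul_right_inj' (norm_ne_zero_iff.mpr hx)] at hij
  have := zpow_right_injective₀ (zero_lt_one.trans hp1) hp1.ne' hij
  omega

theorem hasSum_setIntegral_ball_comp_norm [MeasurableSpace ℚ_[p]] [BorelSpace ℚ_[p]]
    (μ : Measure ℚ_[p]) [IsFiniteMeasureOnCompacts μ] [NullSingletonClass μ] (g : ℝ → ℝ)
    {x : ℚ_[p]} (hx : x ≠ 0)
    (hg : Summable fun j : ℕ => μ.real (sphere 0 ‖x * (p : ℚ_[p]) ^ (j + 1)‖) *
      ‖g ‖x * (p : ℚ_[p]) ^ (j + 1)‖‖) :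
    HasSum (fun j : ℕ =>
        μ.real (sphere 0 ‖x * (p : ℚ_[p]) ^ (j + 1)‖) * g ‖x * (p : ℚ_[p]) ^ (j + 1)‖)
      (∫ y in ball 0 ‖x‖, g ‖y‖ ∂μ) := by
  rw [← setIntegral_congr_set (sdiff_null_ae_eq_self (measure_singleton 0)),
    ball_zero_norm_sdiff_zero_eq_iUnion_sphere hx]
  refine hasSum_setIntegral_iUnion_of_eqOn_const (fun _ => isClosed_sphere.measurableSet)
    ?_ (fun _ => (isCompact_sphere _ _).measure_lt_top.ne)
    (fun _ _ hy => congrArg g (mem_sphere_zero_iff_norm.mp hy)) hg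
  intro i j hij
  refine Set.disjoint_left.mpr fun y hyi hyj => hij (norm_mul_p_pow_succ_injective hx ?_)
  rw [mem_sphere_zero_iff_norm] at hyi hyj
  exact hyi.symm.trans hyj

section Haar

variable [MeasurableSpace ℚ_[p]] [BorelSpace ℚ_[p]] (μ : Measure ℚ_[p]) [μ.IsAddHaarMeasure]

theorem measureReal_sphere_zero_one :
    μ.real (sphere 0 1) = (1 - (p : ℝ)⁻¹) * μ.real (closedBall 0 1) := by
  have hp : (p : ℝ) ≠ 0 := by exact_mod_cast (Fact.out : p.Prime).ne_zero
  have hball : μ.real (closedBall 0 1) = p * μ.real (ball 0 1) := by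
    simp [measureReal_def, measure_closedBall_zero_one_eq_mul μ]
  rw [← closedBall_sdiff_ball, measureReal_sdiff ball_subset_closedBall measurableSet_ball
    measure_closedBall_lt_top.ne, hball]
  field_simp

theorem measureReal_sphere_norm {a : ℚ_[p]} (ha : a ≠ 0) :
    μ.real (sphere 0 ‖a‖) = (1 - (p : ℝ)⁻¹) * ‖a‖ * μ.real (closedBall 0 1) := by
  have hsphere : sphere (0 : ℚ_[p]) ‖a‖ = Units.mk0 a ha • sphere 0 1 :=
    ((smul_sphere' ha 0 1).trans (by simp)).symm
  rw [hsphere, measureReal_def, ← distribHaarChar_mul, distribHaarChar_eq_nnnorm,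
    ENNReal.toReal_mul, ← measureReal_def, measureReal_sphere_zero_one]
  simp only [Units.val_mk0, ENNReal.coe_toReal, coe_nnnorm]
  ring

theorem setIntegral_ball_log_kernel_moment (m : ℕ) {x : ℚ_[p]} (hx : x ≠ 0) :
    ∫ y in ball 0 ‖x‖, (Real.log ‖x‖ - Real.log ‖y‖) * ‖y‖ ^ m ∂μ
      = logMomentConst p m * ‖x‖ ^ (m + 1) * μ.real (closedBall 0 1) := by
  have hp1 : (1 : ℝ) < p := by exact_mod_cast (Fact.out : p.Prime).one_lt
  set q : ℝ := ((p : ℝ) ^ (m + 1))⁻¹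
  set C : ℝ := (1 - (p : ℝ)⁻¹) * Real.log p * ‖x‖ ^ (m + 1) * μ.real (closedBall 0 1)
  have hq : ‖q‖ < 1 := by
    rw [Real.norm_of_nonneg (by positivity)]
    exact inv_lt_one_of_one_lt₀ (one_lt_pow₀ hp1 m.succ_ne_zero)
  have hnorm (j : ℕ) :
      ‖x * (p : ℚ_[p]) ^ (j + 1)‖ = ‖x‖ * ((p : ℝ) ^ (j + 1))⁻¹ := by
    rw [norm_mul, norm_pow, norm_p, inv_pow]
  set g : ℝ → ℝ := fun r => (Real.log ‖x‖ - Real.log r) * r ^ m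
  have hg (j : ℕ) : g ‖x * (p : ℚ_[p]) ^ (j + 1)‖
      = ((j : ℝ) + 1) * Real.log p * (‖x‖ * ((p : ℝ) ^ (j + 1))⁻¹) ^ m := by
    simp only [g, hnorm]
    rw [Real.log_mul (norm_ne_zero_iff.mpr hx) (by positivity), Real.log_inv, Real.log_pow]
    push_cast
    ring
  have hterm (j : ℕ) :
      μ.real (sphere 0 ‖x * (p : ℚ_[p]) ^ (j + 1)‖) * g ‖x * (p : ℚ_[p]) ^ (j + 1)‖
        = C * (((j : ℝ) + 1) * q ^ (j + 1)) := by
    have hp : (p : ℚ_[p]) ≠ 0 := by exact_mod_cast (Fact.out : p.Prime).ne_zero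
    rw [measureReal_sphere_norm μ (mul_ne_zero hx (pow_ne_zero _ hp)), hg, hnorm]
    ring
  have hsum := (hasSum_succ_mul_pow_succ hq).mul_left C
  simp only [← hterm] at hsum
  have hsummable : Summable fun j : ℕ => μ.real (sphere 0 ‖x * (p : ℚ_[p]) ^ (j + 1)‖) *
      ‖g ‖x * (p : ℚ_[p]) ^ (j + 1)‖‖ :=
    hsum.summable.congr fun j => by rw [Real.norm_of_nonneg (by rw [hg]; positivity)]
  calc ∫ y in ball 0 ‖x‖, (Real.log ‖x‖ - Real.log ‖y‖) * ‖y‖ ^ m ∂μ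
      = C * (q / (1 - q) ^ 2) :=
        (hasSum_setIntegral_ball_comp_norm μ g hx hsummable).unique hsum
    _ = logMomentConst p m * ‖x‖ ^ (m + 1) * μ.real (closedBall 0 1) := by
        unfold logMomentConst
        ring

end Haar

theorem logMomentConst_le (m : ℕ) :
    logMomentConst p m ≤ Real.log p / (p - 1) * ((p : ℝ) ^ m)⁻¹ := by
  have hp1 : (1 : ℝ) < p := by exact_mod_cast (Fact.out : p.Prime).one_lt
  have hq : ((p : ℝ) ^ (m + 1))⁻¹ ≤ 1 / p := by
    rw [one_div]
    exact inv_anti₀ (by positivity) (le_self_pow₀ hp1.le m.succ_ne_zero)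
  have hp0 : 0 < 1 - 1 / (p : ℝ) := by
    rw [sub_pos, div_lt_one (by positivity)]
    exact hp1
  calc logMomentConst p m
      ≤ (1 - 1 / (p : ℝ)) * Real.log p * ((p : ℝ) ^ (m + 1))⁻¹
          / (1 - 1 / (p : ℝ)) ^ 2 := by
        unfold logMomentConst
        have := Real.log_pos hp1
        gcongr
    _ = Real.log p / (p - 1) * ((p : ℝ) ^ m)⁻¹ := by
        have : (p : ℝ) - 1 ≠ 0 := by linarith
        field_simp
        ring

end Padic

theorem log_kernel_moment_integral
    (p : ℕ) [Fact p.Prime]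
    [MeasurableSpace ℚ_[p]] [BorelSpace ℚ_[p]]
    (μ : Measure ℚ_[p]) [μ.IsAddHaarMeasure]
    (hμ : μ {x : ℚ_[p] | ‖x‖ ≤ 1} = 1) :
    (∀ m : ℕ, ∀ x : ℚ_[p], x ≠ 0 →
      ∫ y in {y : ℚ_[p] | ‖y‖ < ‖x‖},
          (Real.log ‖x‖ - Real.log ‖y‖) * ‖y‖ ^ m ∂μ
        = (1 - 1 / (p : ℝ)) * Real.log p *
            ((p : ℝ) ^ (m + 1))⁻¹ / (1 - ((p : ℝ) ^ (m + 1))⁻¹) ^ 2 * ‖x‖ ^ (m + 1)) ∧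
    ∃ A : ℝ, 0 < A ∧ ∀ m : ℕ,
      (1 - 1 / (p : ℝ)) * Real.log p *
          ((p : ℝ) ^ (m + 1))⁻¹ / (1 - ((p : ℝ) ^ (m + 1))⁻¹) ^ 2
        ≤ A * ((p : ℝ) ^ m)⁻¹ := by
  have hp1 : (1 : ℝ) < p := by exact_mod_cast (Fact.out : p.Prime).one_lt
  have hball : μ.real (closedBall 0 1) = 1 := by
    rw [measureReal_def, show closedBall (0 : ℚ_[p]) 1 = {x | ‖x‖ ≤ 1} from
      Set.ext fun _ => mem_closedBall_zero_iff, hμ, ENNReal.toReal_one]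
  refine ⟨fun m x hx => ?_, Real.log p / (p - 1), div_pos (Real.log_pos hp1) (sub_pos.mpr hp1),
    Padic.logMomentConst_le⟩
  rw [← ball_zero_eq, Padic.setIntegral_ball_log_kernel_moment μ m hx, hball, mul_one]
  rfl
end

section
/- Let α > 0, N ∈ ℤ, M > 0, and let B_N = {x ∈ ℚ_p : ‖x‖ ≤ p^N}. Define κ(x, y) = | ‖x‖^{α-1} - ‖y‖^{α-1} | if α ≠ 1, and κ(x, y) = log‖x‖ - log‖y‖ if α = 1 (for ‖y‖ < ‖x‖). Suppose w : B_N → ℂ is continuous and bounded and satisfies |w(x)| ≤ M ∫_{‖y‖ < ‖x‖} κ(x, y) |w(y)| dμ(y) for all x ∈ B_N with x ≠ 0, and w(0) = 0. Then w ≡ 0 on B_N. -/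
open MeasureTheory

open scoped Classical in
/-- The kernel `κ(x,y)`: logarithmic for `α = 1`, of Riesz type otherwise. -/
noncomputable def kker (p : ℕ) [Fact p.Prime] (α : ℝ) (x y : ℚ_[p]) : ℝ :=
  if α = 1 then Real.log ‖x‖ - Real.log ‖y‖
  else |‖x‖ ^ (α - 1) - ‖y‖ ^ (α - 1)|

/-!
Put `A` for a constant with `∫_{‖y‖<‖x‖} κ(x,y) dμ(y) ≤ A ‖x‖^α`. Since `‖y‖ < ‖x‖` forces
`‖y‖ ≤ ‖x‖ / p`, a bound `‖w y‖ ≤ D ‖y‖^(αm)` on the ball, fed into the inequality, improves to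
`‖w x‖ ≤ M A p^(-αm) D ‖x‖^(α(m+1))`. Iterating from `‖w‖ ≤ B` gives
`‖w x‖ ≤ B ∏_{i<m} M A ‖x‖^α p^(-αi)`, a product of factors tending to `0`, so `w x = 0`.

The constant `A` exists because `κ(x,y) ≤ c ‖x‖^(α-γ) ‖y‖^(γ-1)` for some `γ > 0`, and
`‖y‖^(γ-1)` is integrable near `0`: summing over the spheres `‖y‖ = p^k`, whose measures are
`O(p^k)` since the ball of radius `p^(k+1)` contains `p` disjoint translates of the ball of
radius `p^k`, gives `∫_{‖y‖<‖x‖} ‖y‖^(γ-1) dμ(y) ≤ C ‖x‖^γ`.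
-/

open Metric Filter Topology Function
open scoped ENNReal

namespace Padic

variable {p : ℕ} [hp : Fact p.Prime]

theorem one_lt_p : (1 : ℝ) < p := mod_cast hp.out.one_lt

theorem norm_le_inv_mul_of_norm_lt {x y : ℚ_[p]} (h : ‖y‖ < ‖x‖) : ‖y‖ ≤ (p : ℝ)⁻¹ * ‖x‖ := by
  have hx : x ≠ 0 := norm_pos_iff.1 ((norm_nonneg y).trans_lt h)
  rw [norm_eq_zpow_neg_valuation hx] at h ⊢
  rwa [norm_lt_pow_iff_norm_le_pow_sub_one, zpow_sub_one₀ (Nat.cast_pos.2 hp.out.pos).ne',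
    mul_comm] at h

theorem rpow_norm_le_of_norm_lt {x y : ℚ_[p]} {a : ℝ} (ha : 0 ≤ a) (h : ‖y‖ < ‖x‖) :
    ‖y‖ ^ a ≤ (p : ℝ)⁻¹ ^ a * ‖x‖ ^ a := by
  rw [← Real.mul_rpow (inv_nonneg.2 (Nat.cast_nonneg p)) (norm_nonneg _)]
  exact Real.rpow_le_rpow (norm_nonneg _) (norm_le_inv_mul_of_norm_lt h) ha

theorem exists_norm_eq_zpow_of_norm_lt {y : ℚ_[p]} (hy : y ≠ 0) {n : ℤ} (h : ‖y‖ < (p : ℝ) ^ n) :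
    ∃ j : ℕ, ‖y‖ = (p : ℝ) ^ (n - 1 - j) := by
  rw [norm_eq_zpow_neg_valuation hy] at h ⊢
  have := (zpow_lt_zpow_iff_right₀ one_lt_p).1 h
  exact ⟨(n - 1 + y.valuation).toNat, by congr 1; omega⟩

theorem norm_natCast_sub_natCast {i j : ℕ} (hi : i < p) (hj : j < p) (hij : i ≠ j) :
    ‖(i - j : ℚ_[p])‖ = 1 := by
  have hcast : (i - j : ℚ_[p]) = ((i - j : ℤ) : ℚ_[p]) := by push_cast; rfl
  refine hcast ▸ (norm_int_le_one _).antisymm (not_lt.1 fun hlt => hij ?_)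
  have hdvd : (p : ℤ) ∣ (i : ℤ) - j := norm_intCast_lt_one_iff.1 hlt
  exact (Nat.modEq_iff_dvd.2 hdvd).eq_of_lt_of_lt hj hi |>.symm

section HaarMeasure

variable [MeasurableSpace ℚ_[p]] [BorelSpace ℚ_[p]] (μ : Measure ℚ_[p]) [μ.IsAddHaarMeasure]

theorem natCast_mul_measure_closedBall_le (k : ℤ) :
    p * μ (closedBall 0 ((p : ℝ) ^ k)) ≤ μ (closedBall 0 ((p : ℝ) ^ (k + 1))) := by
  have hp0 : (0 : ℝ) < p := Nat.cast_pos.2 hp.out.pos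
  set t : Fin p → ℚ_[p] := fun i => i * (p : ℚ_[p]) ^ (-(k + 1))
  have hnorm_t : ∀ i, ‖t i‖ ≤ (p : ℝ) ^ (k + 1) := fun i => by
    simpa [t, norm_p_zpow] using
      mul_le_mul_of_nonneg_right (IsUltrametricDist.norm_natCast_le_one ℚ_[p] i)
        (zpow_pos hp0 (k + 1)).le
  have hdisj : Pairwise (Disjoint on fun i => closedBall (t i) ((p : ℝ) ^ k)) := by
    intro i j hij
    refine (IsUltrametricDist.closedBall_eq_or_disjoint _ _ _).resolve_left fun h => ?_
    have hmem : t j ∈ closedBall (t i) ((p : ℝ) ^ k) := h ▸ mem_closedBall_self (zpow_pos hp0 k).le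
    rw [mem_closedBall, dist_eq_norm, ← sub_mul, norm_mul, norm_p_zpow, neg_neg,
      norm_natCast_sub_natCast j.isLt i.isLt (Fin.val_ne_of_ne hij.symm), one_mul] at hmem
    exact (zpow_lt_zpow_right₀ one_lt_p (lt_add_one k)).not_ge hmem
  have hsub : ⋃ i, closedBall (t i) ((p : ℝ) ^ k) ⊆ closedBall 0 ((p : ℝ) ^ (k + 1)) :=
    Set.iUnion_subset fun i => by
      rw [IsUltrametricDist.closedBall_eq_of_mem (mem_closedBall_zero_iff.2 (hnorm_t i))]
      exact closedBall_subset_closedBall (zpow_le_zpow_right₀ one_lt_p.le (by omega))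
  calc (p : ℝ≥0∞) * μ (closedBall 0 ((p : ℝ) ^ k))
      = ∑ i, μ (closedBall (t i) ((p : ℝ) ^ k)) := by simp [Measure.addHaar_closedBall_center]
    _ = μ (⋃ i, closedBall (t i) ((p : ℝ) ^ k)) :=
      (measure_iUnion hdisj fun _ => measurableSet_closedBall).trans (tsum_fintype _) |>.symm
    _ ≤ _ := measure_mono hsub

theorem measureReal_closedBall_zpow_le {k K : ℤ} (hk : k ≤ K) :
    μ.real (closedBall 0 ((p : ℝ) ^ k)) ≤
      (p : ℝ) ^ (k - K) * μ.real (closedBall 0 ((p : ℝ) ^ K)) := by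
  have hp0 : (0 : ℝ) < p := Nat.cast_pos.2 hp.out.pos
  induction k, hk using Int.leInductionDown with
  | base => simp
  | pred k _ ih =>
    have hstep : (p : ℝ) * μ.real (closedBall 0 ((p : ℝ) ^ (k - 1))) ≤
        μ.real (closedBall 0 ((p : ℝ) ^ k)) := by
      simpa [measureReal_def] using ENNReal.toReal_mono measure_closedBall_lt_top.ne
        (natCast_mul_measure_closedBall_le μ (k - 1))
    calc μ.real (closedBall 0 ((p : ℝ) ^ (k - 1)))
        ≤ (p : ℝ)⁻¹ * μ.real (closedBall 0 ((p : ℝ) ^ k)) := (le_inv_mul_iff₀ hp0).2 hstep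
      _ ≤ (p : ℝ)⁻¹ * ((p : ℝ) ^ (k - K) * μ.real (closedBall 0 ((p : ℝ) ^ K))) := by gcongr
      _ = (p : ℝ) ^ (k - 1 - K) * μ.real (closedBall 0 ((p : ℝ) ^ K)) := by
        rw [sub_right_comm, zpow_sub_one₀ hp0.ne']; ring

theorem integrableOn_norm_rpow_and_setIntegral_sphere_le (s : ℝ) {k K : ℤ} (hk : k ≤ K) :
    IntegrableOn (fun y => ‖y‖ ^ s) (sphere (0 : ℚ_[p]) ((p : ℝ) ^ k)) μ ∧
      ∫ y in sphere (0 : ℚ_[p]) ((p : ℝ) ^ k), ‖y‖ ^ s ∂μ ≤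
        (p : ℝ) ^ (-K) * μ.real (closedBall 0 ((p : ℝ) ^ K)) * ((p : ℝ) ^ k) ^ (s + 1) := by
  have hp0 : (0 : ℝ) < p := Nat.cast_pos.2 hp.out.pos
  set S := sphere (0 : ℚ_[p]) ((p : ℝ) ^ k)
  have hS : MeasurableSet S := isClosed_sphere.measurableSet
  have hS_ball : S ⊆ closedBall 0 ((p : ℝ) ^ k) := sphere_subset_closedBall
  have hS_fin : μ S ≠ ⊤ := (measure_mono hS_ball).trans_lt measure_closedBall_lt_top |>.ne
  have hS_const : Set.EqOn (fun _ => ((p : ℝ) ^ k) ^ s) (fun y => ‖y‖ ^ s) S :=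
    fun y hy => by simp only [mem_sphere_zero_iff_norm.1 hy]
  refine ⟨(integrableOn_const hS_fin).congr_fun hS_const hS, ?_⟩
  have hS_le : μ.real S ≤ (p : ℝ) ^ k * ((p : ℝ) ^ (-K) * μ.real (closedBall 0 ((p : ℝ) ^ K))) :=
    calc μ.real S ≤ μ.real (closedBall 0 ((p : ℝ) ^ k)) :=
          measureReal_mono hS_ball measure_closedBall_lt_top.ne
      _ ≤ (p : ℝ) ^ (k - K) * μ.real (closedBall 0 ((p : ℝ) ^ K)) :=
          measureReal_closedBall_zpow_le μ hk
      _ = _ := by rw [sub_eq_add_neg, zpow_add₀ hp0.ne', mul_assoc]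
  rw [← setIntegral_congr_fun hS hS_const, setIntegral_const, smul_eq_mul,
    Real.rpow_add_one (zpow_pos hp0 k).ne']
  calc μ.real S * ((p : ℝ) ^ k) ^ s
      ≤ (p : ℝ) ^ k * ((p : ℝ) ^ (-K) * μ.real (closedBall 0 ((p : ℝ) ^ K))) * ((p : ℝ) ^ k) ^ s :=
        mul_le_mul_of_nonneg_right hS_le (Real.rpow_nonneg (zpow_pos hp0 k).le s)
    _ = _ := by ring

theorem setOf_norm_lt_ae_eq_iUnion_sphere {n : ℤ} :
    {y : ℚ_[p] | ‖y‖ < (p : ℝ) ^ n} =ᵐ[μ] ⋃ j : ℕ, sphere 0 ((p : ℝ) ^ (n - 1 - j)) := by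
  have hp0 : (0 : ℝ) < p := Nat.cast_pos.2 hp.out.pos
  have hdiff : {y : ℚ_[p] | ‖y‖ < (p : ℝ) ^ n} \ {0} =
      ⋃ j : ℕ, sphere 0 ((p : ℝ) ^ (n - 1 - j)) := by
    ext y
    simp only [Set.mem_sdiff, Set.mem_ofPred_eq, Set.mem_singleton_iff, Set.mem_iUnion,
      mem_sphere_zero_iff_norm]
    constructor
    · exact fun ⟨hlt, hy⟩ => exists_norm_eq_zpow_of_norm_lt hy hlt
    · rintro ⟨j, hj⟩
      refine ⟨hj ▸ zpow_lt_zpow_right₀ one_lt_p (by omega), fun hy => ?_⟩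
      exact (zpow_pos hp0 _).ne' (hj ▸ hy ▸ norm_zero)
  exact hdiff ▸ (sdiff_null_ae_eq_self (measure_singleton 0)).symm

theorem integrableOn_norm_rpow_and_setIntegral_le {s : ℝ} (hs : -1 < s) (K : ℤ) :
    ∃ C, 0 ≤ C ∧ ∀ x : ℚ_[p], x ≠ 0 → ‖x‖ ≤ (p : ℝ) ^ K →
      IntegrableOn (fun y => ‖y‖ ^ s) {y | ‖y‖ < ‖x‖} μ ∧
        ∫ y in {y | ‖y‖ < ‖x‖}, ‖y‖ ^ s ∂μ ≤ C * ‖x‖ ^ (s + 1) := by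
  have hp0 : (0 : ℝ) < p := Nat.cast_pos.2 hp.out.pos
  set c := (p : ℝ) ^ (-K) * μ.real (closedBall 0 ((p : ℝ) ^ K))
  set q := (p : ℝ)⁻¹ ^ (s + 1)
  have hq0 : 0 ≤ q := Real.rpow_nonneg (inv_nonneg.2 hp0.le) _
  have hq1 : q < 1 :=
    Real.rpow_lt_one (inv_nonneg.2 hp0.le) (inv_lt_one_of_one_lt₀ one_lt_p) (by linarith)
  have hgeom : Summable fun j : ℕ => c * q ^ (j + 1) :=
    ((summable_nat_add_iff 1).2 (summable_geometric_of_lt_one hq0 hq1)).mul_left c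
  refine ⟨∑' j : ℕ, c * q ^ (j + 1), tsum_nonneg fun j => by positivity, fun x hx hxK => ?_⟩
  obtain ⟨n, hn⟩ : ∃ n : ℤ, ‖x‖ = (p : ℝ) ^ n := ⟨_, norm_eq_zpow_neg_valuation hx⟩
  have hnK : n ≤ K := (zpow_le_zpow_iff_right₀ one_lt_p).1 (hn ▸ hxK)
  set S : ℕ → Set ℚ_[p] := fun j => sphere 0 ((p : ℝ) ^ (n - 1 - j))
  have hS_meas : ∀ j, MeasurableSet (S j) := fun j => isClosed_sphere.measurableSet
  have hS_disj : Pairwise (Disjoint on S) := fun i j hij => Set.disjoint_left.2 fun y hi hj => by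
    have := zpow_right_injective₀ hp0 one_lt_p.ne'
      ((mem_sphere_zero_iff_norm.1 hi).symm.trans (mem_sphere_zero_iff_norm.1 hj))
    exact hij (by omega)
  have hS : ∀ j : ℕ, IntegrableOn (fun y => ‖y‖ ^ s) (S j) μ ∧
      ∫ y in S j, ‖y‖ ^ s ∂μ ≤ c * q ^ (j + 1) * ‖x‖ ^ (s + 1) := fun j => by
    have hr : (p : ℝ) ^ (n - 1 - j) = ‖x‖ * (p : ℝ)⁻¹ ^ (j + 1) := by
      rw [hn, show n - 1 - j = n - ((j + 1 : ℕ) : ℤ) by push_cast; ring, zpow_sub₀ hp0.ne',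
        zpow_natCast, div_eq_mul_inv, inv_pow]
    obtain ⟨hint, hle⟩ :=
      integrableOn_norm_rpow_and_setIntegral_sphere_le μ s (k := n - 1 - j) (K := K) (by omega)
    refine ⟨hint, hle.trans_eq ?_⟩
    rw [hr, Real.mul_rpow (norm_nonneg x) (by positivity),
      ← Real.rpow_pow_comm (inv_nonneg.2 hp0.le)]
    ring
  have hU := setOf_norm_lt_ae_eq_iUnion_sphere μ (n := n)
  rw [← hn] at hU
  have hsum : Summable fun j => ∫ y in S j, ‖y‖ ^ s ∂μ :=
    (hgeom.mul_right (‖x‖ ^ (s + 1))).of_nonneg_of_le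
      (fun j => setIntegral_nonneg (hS_meas j) fun y _ => by positivity) fun j => (hS j).2
  have hint : IntegrableOn (fun y => ‖y‖ ^ s) (⋃ j, S j) μ := by
    refine integrableOn_iUnion_of_summable_integral_norm (fun j => (hS j).1) ?_
    simpa only [Real.norm_of_nonneg (Real.rpow_nonneg (norm_nonneg _) s)] using hsum
  refine ⟨hint.congr_set_ae hU, ?_⟩
  rw [setIntegral_congr_set hU, integral_iUnion hS_meas hS_disj hint, ← tsum_mul_right]
  exact hsum.tsum_le_tsum (fun j => (hS j).2) (hgeom.mul_right _)

end HaarMeasure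

end Padic

section Kernel

variable {p : ℕ} [Fact p.Prime] {α : ℝ}

theorem kker_nonneg {x y : ℚ_[p]} (hy : y ≠ 0) (h : ‖y‖ < ‖x‖) : 0 ≤ kker p α x y := by
  unfold kker
  split_ifs
  · exact sub_nonneg.2 (Real.log_le_log (norm_pos_iff.2 hy) h.le)
  · exact abs_nonneg _

theorem measurable_kker [MeasurableSpace ℚ_[p]] [BorelSpace ℚ_[p]] (x : ℚ_[p]) :
    Measurable (kker p α x) := by
  unfold kker
  split_ifs <;> fun_prop

theorem exists_kker_le_mul_rpow (hα : 0 < α) :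
    ∃ c γ : ℝ, 0 ≤ c ∧ 0 < γ ∧ ∀ x y : ℚ_[p], y ≠ 0 → ‖y‖ < ‖x‖ →
      kker p α x y ≤ c * ‖x‖ ^ (α - γ) * ‖y‖ ^ (γ - 1) := by
  rcases lt_trichotomy α 1 with hlt | rfl | hgt
  · refine ⟨1, α, zero_le_one, hα, fun x y hy h => ?_⟩
    rw [kker, if_neg hlt.ne, sub_self, Real.rpow_zero, one_mul, one_mul]
    exact abs_sub_le_of_nonneg_of_le (by positivity)
      (Real.rpow_le_rpow_of_nonpos (norm_pos_iff.2 hy) h.le (by linarith)) (by positivity) le_rfl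
  · refine ⟨2, 1 / 2, zero_le_two, one_half_pos, fun x y hy h => ?_⟩
    have hy0 := norm_pos_iff.2 hy
    have hx0 := hy0.trans h
    rw [kker, if_pos rfl, ← Real.log_div hx0.ne' hy0.ne']
    calc Real.log (‖x‖ / ‖y‖) ≤ (‖x‖ / ‖y‖) ^ (1 / 2 : ℝ) / (1 / 2) :=
          Real.log_le_rpow_div (by positivity) one_half_pos
      _ = 2 * ‖x‖ ^ (1 - 1 / 2 : ℝ) * ‖y‖ ^ (1 / 2 - 1 : ℝ) := by
          rw [Real.div_rpow hx0.le hy0.le, show (1 / 2 - 1 : ℝ) = -(1 / 2) by norm_num,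
            Real.rpow_neg hy0.le]
          norm_num
          ring
  · refine ⟨1, 1, zero_le_one, one_pos, fun x y hy h => ?_⟩
    rw [kker, if_neg hgt.ne', sub_self, Real.rpow_zero, mul_one, one_mul]
    exact abs_sub_le_of_nonneg_of_le (by positivity) le_rfl (by positivity)
      (Real.rpow_le_rpow (norm_nonneg _) h.le (by linarith))

theorem integrableOn_kker_and_setIntegral_le [MeasurableSpace ℚ_[p]] [BorelSpace ℚ_[p]]
    (μ : Measure ℚ_[p]) [μ.IsAddHaarMeasure] (hα : 0 < α) (K : ℤ) :
    ∃ A, 0 ≤ A ∧ ∀ x : ℚ_[p], x ≠ 0 → ‖x‖ ≤ (p : ℝ) ^ K →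
      IntegrableOn (kker p α x) {y | ‖y‖ < ‖x‖} μ ∧
        ∫ y in {y | ‖y‖ < ‖x‖}, kker p α x y ∂μ ≤ A * ‖x‖ ^ α := by
  obtain ⟨c, γ, hc, hγ, hle⟩ := exists_kker_le_mul_rpow (p := p) hα
  obtain ⟨C, hC, hrad⟩ :=
    Padic.integrableOn_norm_rpow_and_setIntegral_le μ (s := γ - 1) (by linarith) K
  refine ⟨c * C, mul_nonneg hc hC, fun x hx hxK => ?_⟩
  obtain ⟨hint, hint_le⟩ := hrad x hx hxK
  set U := {y : ℚ_[p] | ‖y‖ < ‖x‖}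
  have hU : MeasurableSet U := measurableSet_lt measurable_norm measurable_const
  have hmaj : IntegrableOn (fun y => c * ‖x‖ ^ (α - γ) * ‖y‖ ^ (γ - 1)) U μ := hint.const_mul _
  have hdom : ∀ᵐ y ∂μ.restrict U,
      0 ≤ kker p α x y ∧ kker p α x y ≤ c * ‖x‖ ^ (α - γ) * ‖y‖ ^ (γ - 1) := by
    filter_upwards [ae_restrict_mem hU, ae_restrict_of_ae (μ.ae_ne 0)] with y hyU hy0
    exact ⟨kker_nonneg hy0 hyU, hle x y hy0 hyU⟩
  have hkint : IntegrableOn (kker p α x) U μ :=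
    hmaj.mono' (measurable_kker x).aestronglyMeasurable
      (hdom.mono fun y hy => (Real.norm_of_nonneg hy.1).trans_le hy.2)
  refine ⟨hkint, ?_⟩
  calc ∫ y in U, kker p α x y ∂μ
      ≤ ∫ y in U, c * ‖x‖ ^ (α - γ) * ‖y‖ ^ (γ - 1) ∂μ :=
        integral_mono_ae hkint hmaj (hdom.mono fun y hy => hy.2)
    _ = c * ‖x‖ ^ (α - γ) * ∫ y in U, ‖y‖ ^ (γ - 1) ∂μ := integral_const_mul _ _
    _ ≤ c * ‖x‖ ^ (α - γ) * (C * ‖x‖ ^ (γ - 1 + 1)) := by gcongr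
    _ = c * C * ‖x‖ ^ α := by
      rw [sub_add_cancel, mul_mul_mul_comm, ← Real.rpow_add (norm_pos_iff.2 hx), sub_add_cancel]

theorem norm_le_of_setIntegral_kker_le [MeasurableSpace ℚ_[p]] [BorelSpace ℚ_[p]]
    {μ : Measure ℚ_[p]} [μ.IsAddHaarMeasure] {E : Type*} [NormedAddCommGroup E] {w : ℚ_[p] → E}
    {x : ℚ_[p]} {M D A : ℝ} (hM : 0 ≤ M) (hD : 0 ≤ D)
    (hineq : ‖w x‖ ≤ M * ∫ y in {y | ‖y‖ < ‖x‖}, kker p α x y * ‖w y‖ ∂μ)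
    (hint : IntegrableOn (kker p α x) {y | ‖y‖ < ‖x‖} μ)
    (hA : ∫ y in {y | ‖y‖ < ‖x‖}, kker p α x y ∂μ ≤ A)
    (hw : ∀ y, ‖y‖ < ‖x‖ → ‖w y‖ ≤ D) :
    ‖w x‖ ≤ M * (D * A) := by
  have hU : MeasurableSet {y : ℚ_[p] | ‖y‖ < ‖x‖} :=
    measurableSet_lt measurable_norm measurable_const
  have hκ : ∀ᵐ y ∂μ.restrict {y | ‖y‖ < ‖x‖}, 0 ≤ kker p α x y ∧ ‖w y‖ ≤ D := by
    filter_upwards [ae_restrict_mem hU, ae_restrict_of_ae (μ.ae_ne 0)] with y hyU hy0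
    exact ⟨kker_nonneg hy0 hyU, hw y hyU⟩
  refine hineq.trans (mul_le_mul_of_nonneg_left ?_ hM)
  calc ∫ y in {y | ‖y‖ < ‖x‖}, kker p α x y * ‖w y‖ ∂μ
      ≤ ∫ y in {y | ‖y‖ < ‖x‖}, D * kker p α x y ∂μ :=
        integral_mono_of_nonneg (hκ.mono fun y hy => mul_nonneg hy.1 (norm_nonneg _))
          (hint.const_mul D)
          (hκ.mono fun y hy => (mul_le_mul_of_nonneg_left hy.2 hy.1).trans_eq (mul_comm _ _))
    _ = D * ∫ y in {y | ‖y‖ < ‖x‖}, kker p α x y ∂μ := integral_const_mul _ _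
    _ ≤ D * A := mul_le_mul_of_nonneg_left hA hD

end Kernel

-- `‖y‖ < ‖x‖` forces `‖y‖ ^ α ≤ p⁻¹ ^ α * ‖x‖ ^ α`, which shifts the index of the product by one
theorem norm_le_mul_prod_range_of_iterate {p : ℕ} [Fact p.Prime] {E : Type*} [NormedAddCommGroup E]
    {w : ℚ_[p] → E} {R B M A α : ℝ} (hα : 0 < α) (hM : 0 ≤ M) (hA : 0 ≤ A)
    (hB : ∀ x : ℚ_[p], ‖x‖ ≤ R → ‖w x‖ ≤ B) (hw0 : w 0 = 0)
    (hstep : ∀ (x : ℚ_[p]) (D : ℝ), ‖x‖ ≤ R → x ≠ 0 → 0 ≤ D →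
      (∀ y, ‖y‖ < ‖x‖ → ‖w y‖ ≤ D) → ‖w x‖ ≤ M * (D * (A * ‖x‖ ^ α))) (m : ℕ) :
    ∀ x : ℚ_[p], ‖x‖ ≤ R →
      ‖w x‖ ≤ B * ∏ i ∈ Finset.range m, (M * A * ‖x‖ ^ α * ((p : ℝ)⁻¹ ^ α) ^ i) := by
  set ρ := (p : ℝ)⁻¹ ^ α
  induction m with
  | zero => simpa using hB
  | succ m ih =>
    intro x hx
    rcases eq_or_ne x 0 with rfl | hx0
    · simp [hw0, Real.zero_rpow hα.ne']
    have hB0 : 0 ≤ B := (norm_nonneg _).trans (hB x hx)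
    refine (hstep x (B * ∏ i ∈ Finset.range m, (M * A * ‖x‖ ^ α * ρ ^ (i + 1))) hx hx0
      (mul_nonneg hB0 (Finset.prod_nonneg fun i _ => by positivity))
      fun y hy => (ih y (hy.le.trans hx)).trans (mul_le_mul_of_nonneg_left
        (Finset.prod_le_prod (fun i _ => by positivity) fun i _ => ?_) hB0)).trans_eq ?_
    · calc M * A * ‖y‖ ^ α * ρ ^ i
          ≤ M * A * (ρ * ‖x‖ ^ α) * ρ ^ i := by
            gcongr; exact Padic.rpow_norm_le_of_norm_lt hα.le hy
        _ = M * A * ‖x‖ ^ α * ρ ^ (i + 1) := by ring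
    · rw [Finset.prod_range_succ', pow_zero]
      ring

theorem tendsto_prod_range_nhds_zero {R : Type*} [NormedCommRing R] [CompleteSpace R] {c : ℕ → R}
    (hc : Tendsto c atTop (𝓝 0)) : Tendsto (fun m => ∏ i ∈ Finset.range m, c i) atTop (𝓝 0) := by
  refine (summable_of_ratio_norm_eventually_le (r := 1 / 2) (by norm_num) ?_).tendsto_atTop_zero
  filter_upwards [hc.norm.eventually (eventually_le_nhds (by norm_num : ‖(0 : R)‖ < 1 / 2))]
    with m hm
  rw [Finset.prod_range_succ, mul_comm (1 / 2 : ℝ)]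
  exact (norm_mul_le _ _).trans (mul_le_mul_of_nonneg_left hm (norm_nonneg _))

theorem iteration_forces_zero_general
    (p : ℕ) [Fact p.Prime]
    [MeasurableSpace ℚ_[p]] [BorelSpace ℚ_[p]]
    (μ : Measure ℚ_[p]) [μ.IsAddHaarMeasure]
    (α : ℝ) (hα : 0 < α) (N : ℤ) (M : ℝ) (hM : 0 < M)
    (w : ℚ_[p] → ℂ)
    (hbdd : ∃ B : ℝ, ∀ x : ℚ_[p], ‖x‖ ≤ (p : ℝ) ^ N → ‖w x‖ ≤ B)
    (hw0 : w 0 = 0)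
    (hineq : ∀ x : ℚ_[p], ‖x‖ ≤ (p : ℝ) ^ N → x ≠ 0 →
      ‖w x‖ ≤ M * ∫ y in {y : ℚ_[p] | ‖y‖ < ‖x‖}, kker p α x y * ‖w y‖ ∂μ) :
    ∀ x : ℚ_[p], ‖x‖ ≤ (p : ℝ) ^ N → w x = 0 := by
  obtain ⟨B, hB⟩ := hbdd
  obtain ⟨A, hA, hκ⟩ := integrableOn_kker_and_setIntegral_le μ hα N
  have bound := norm_le_mul_prod_range_of_iterate hα hM.le hA hB hw0 fun x D hx hx0 hD hw =>
    norm_le_of_setIntegral_kker_le hM.le hD (hineq x hx hx0) (hκ x hx0 hx).1 (hκ x hx0 hx).2 hw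
  intro x hx
  have hρ1 : (p : ℝ)⁻¹ ^ α < 1 :=
    Real.rpow_lt_one (by positivity) (inv_lt_one_of_one_lt₀ Padic.one_lt_p) hα
  have hc : Tendsto (fun i => M * A * ‖x‖ ^ α * ((p : ℝ)⁻¹ ^ α) ^ i) atTop (𝓝 0) := by
    simpa using (tendsto_pow_atTop_nhds_zero_of_lt_one (by positivity) hρ1).const_mul _
  have hlim := (tendsto_prod_range_nhds_zero hc).const_mul B
  rw [mul_zero] at hlim
  exact norm_le_zero_iff.1 (ge_of_tendsto' hlim fun m => bound m x hx)

theorem iteration_forces_zero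
    (p : ℕ) [Fact p.Prime]
    [MeasurableSpace ℚ_[p]] [BorelSpace ℚ_[p]]
    (μ : Measure ℚ_[p]) [μ.IsAddHaarMeasure]
    (hμ : μ {x : ℚ_[p] | ‖x‖ ≤ 1} = 1)
    (α : ℝ) (hα : 0 < α) (N : ℤ) (M : ℝ) (hM : 0 < M)
    (w : ℚ_[p] → ℂ)
    (hcont : ContinuousOn w {x : ℚ_[p] | ‖x‖ ≤ (p : ℝ) ^ N})
    (hbdd : ∃ B : ℝ, ∀ x : ℚ_[p], ‖x‖ ≤ (p : ℝ) ^ N → ‖w x‖ ≤ B)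
    (hw0 : w 0 = 0)
    (hineq : ∀ x : ℚ_[p], ‖x‖ ≤ (p : ℝ) ^ N → x ≠ 0 →
      ‖w x‖ ≤ M * ∫ y in {y : ℚ_[p] | ‖y‖ < ‖x‖}, kker p α x y * ‖w y‖ ∂μ) :
    ∀ x : ℚ_[p], ‖x‖ ≤ (p : ℝ) ^ N → w x = 0 :=
  iteration_forces_zero_general p μ α hα N M hM w hbdd hw0 hineq
end
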